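/- arXiv:2009.04566 — 8 statements merged into one kernel-verified Lean document; each statement's English description precedes it below -/
import Mathlib

section
/- Let Γ = ⟨σ₁, σ₂⟩ be a group with (σ₁σ₂)² = 1, where σ₁ has order p and σ₂ has order q, and suppose the subgroup ⟨σ₂ᵃ⟩ is normal in Γ. Then there exists an integer s with s² ≡ 1 (mod q/a) such that σ₂ᵃσ₁ = σ₁σ₂^{sa}. In particular, σ₁² commutes with σ₂ᵃ, and if p is odd then σ₂ᵃ is central in Γ. -/
theorem stmt_3 {G : Type*} [Group G] (s1 s2 : G) (p q a : ℕ)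
    (hgen : Subgroup.closure {s1, s2} = ⊤)
    (h12 : (s1 * s2) ^ 2 = 1)
    (hp : orderOf s1 = p) (hq : orderOf s2 = q)
    (ha : 0 < a) (hdvd : a ∣ q)
    (hnorm : (Subgroup.zpowers (s2 ^ a)).Normal) :
    ∃ s : ℤ, s ^ 2 ≡ 1 [ZMOD ((q / a : ℕ) : ℤ)] ∧
      s2 ^ a * s1 = s1 * s2 ^ (s * a) ∧
      s1 ^ 2 * s2 ^ a = s2 ^ a * s1 ^ 2 ∧
      (Odd p → ∀ g : G, g * s2 ^ a = s2 ^ a * g) := by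
  set c := s2 ^ a with hc
  obtain ⟨s, hs⟩ := Subgroup.mem_zpowers_iff.1
    (hnorm.conj_mem c (Subgroup.mem_zpowers _) s1⁻¹)
  rw [inv_inv] at hs
  -- hs : c ^ s = s1⁻¹ * c * s1
  have hcommc : ∀ n : ℤ, Commute s2 (c ^ n) :=
    fun n => ((Commute.refl s2).pow_right a).zpow_right n
  have hconjzpow : ∀ (g x : G) (n : ℤ), (g⁻¹ * x * g) ^ n = g⁻¹ * x ^ n * g := by
    intro g x n
    have := map_zpow (MulAut.conj g⁻¹) x n
    simpa [MulAut.conj_apply, mul_assoc] using this.symm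
  have hsq : ∀ t x : G, t⁻¹ * (t⁻¹ * x * t) * t = (t ^ 2)⁻¹ * x * t ^ 2 := by
    intro t x
    simp [pow_two, mul_assoc]
  have hconj : (s1 * s2)⁻¹ * c * (s1 * s2) = c ^ s := by
    have h1 : (s1 * s2)⁻¹ * c * (s1 * s2) = s2⁻¹ * (s1⁻¹ * c * s1) * s2 := by
      group
    rw [h1, ← hs, (hcommc s).inv_left.eq, mul_assoc, inv_mul_cancel, mul_one]
  have hss : c ^ (s * s) = c := by
    have h2 : ((s1 * s2) ^ 2)⁻¹ * c * (s1 * s2) ^ 2 = c := by rw [h12]; group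
    calc c ^ (s * s) = ((s1 * s2)⁻¹ * c * (s1 * s2)) ^ s := by rw [hconj, zpow_mul]
    _ = (s1 * s2)⁻¹ * c ^ s * (s1 * s2) := hconjzpow _ _ _
    _ = (s1 * s2)⁻¹ * ((s1 * s2)⁻¹ * c * (s1 * s2)) * (s1 * s2) := by rw [hconj]
    _ = ((s1 * s2) ^ 2)⁻¹ * c * (s1 * s2) ^ 2 := hsq _ _
    _ = c := h2
  -- s1^2 commutes with c
  have h4 : s1⁻¹ * (s1⁻¹ * c * s1) * s1 = c := by
    rw [← hs]
    calc s1⁻¹ * c ^ s * s1 = (s1⁻¹ * c * s1) ^ s := (hconjzpow s1 c s).symm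
    _ = (c ^ s) ^ s := by rw [← hs]
    _ = c ^ (s * s) := by rw [← zpow_mul]
    _ = c := hss
  have hcomm1 : s1 ^ 2 * c = c * s1 ^ 2 := by
    calc s1 ^ 2 * c = s1 ^ 2 * (s1⁻¹ * (s1⁻¹ * c * s1) * s1) := by rw [h4]
    _ = c * s1 ^ 2 := by simp [pow_two, mul_assoc]
  refine ⟨s, ?_, ?_, hcomm1, ?_⟩
  · -- modular condition
    have hss' : s2 ^ ((a : ℤ) * (s * s)) = s2 ^ ((a : ℕ) : ℤ) := by
      rw [zpow_mul, zpow_natCast]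
      exact hss
    have hmod : (a : ℤ) * (s * s) ≡ (a : ℤ) [ZMOD ((q : ℕ) : ℤ)] := by
      rw [← hq]
      exact zpow_eq_zpow_iff_modEq.1 hss'
    have hdvd2 : ((q : ℕ) : ℤ) ∣ (a : ℤ) - (a : ℤ) * (s * s) := hmod.dvd
    have hqb : ((q : ℕ) : ℤ) = (a : ℤ) * ((q / a : ℕ) : ℤ) := by
      rw [← Nat.cast_mul, Nat.mul_div_cancel' hdvd]
    rw [hqb, show (a : ℤ) - (a : ℤ) * (s * s) = (a : ℤ) * (1 - s * s) by ring] at hdvd2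
    have ha' : (a : ℤ) ≠ 0 := by exact_mod_cast ha.ne'
    have hb : ((q / a : ℕ) : ℤ) ∣ 1 - s ^ 2 := by
      rw [sq]
      exact (mul_dvd_mul_iff_left ha').1 hdvd2
    exact Int.modEq_iff_dvd.2 hb
  · -- s2^a * s1 = s1 * s2^(s*a)
    have h6 : s2 ^ ((s : ℤ) * a) = c ^ s := by
      rw [hc, ← zpow_natCast s2 a, ← zpow_mul, mul_comm]
    rw [h6, hs]
    group
  · -- odd p
    intro hodd g
    obtain ⟨k, hk⟩ := hodd
    have h1p : s1 ^ p = 1 := by rw [← hp]; exact pow_orderOf_eq_one s1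
    have hs1eq : s1 = ((s1 ^ 2) ^ k)⁻¹ := by
      rw [eq_inv_iff_mul_eq_one, ← pow_mul, ← pow_succ', ← hk]
      exact h1p
    have hC1 : Commute c s1 := by
      rw [hs1eq]
      exact (((show Commute (s1 ^ 2) c from hcomm1).symm).pow_right k).inv_right
    have hle : Subgroup.closure {s1, s2} ≤ Subgroup.centralizer {c} := by
      rw [Subgroup.closure_le]
      rintro x hx
      rcases hx with rfl | rfl
      · exact Subgroup.mem_centralizer_iff.2 (by rintro h rfl; exact hC1.eq)
      · exact Subgroup.mem_centralizer_iff.2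
          (by rintro h rfl; exact ((Commute.refl x).pow_right a).symm.eq)
    have hg : g ∈ Subgroup.centralizer {c} := hle (hgen ▸ Subgroup.mem_top g)
    exact (Subgroup.mem_centralizer_iff.1 hg c rfl).symm
end

section
/- Let Γ = ⟨σ₁, ..., σ_{n-1}⟩ be a finite group such that each σᵢ has order pᵢ and ⟨σ₁,...,σᵢ⟩ ∩ ⟨σⱼ,...,σ_{i+1}⟩ = ⟨σⱼ,...,σᵢ⟩ for all 2 ≤ j ≤ i+1 ≤ n-1 (interpreted as the trivial group when j = i+1). Then |Γ| = p₁p₂⋯p_{n-1} if and only if Γ = ⟨σ₁⟩⟨σ₂⟩⋯⟨σ_{n-1}⟩ (every element is a product σ₁^{a₁}σ₂^{a₂}⋯σ_{n-1}^{a_{n-1}}). -/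
/-- The subgroup generated by the generators with indices in `[a, b]`. -/
def rangeClosure {G : Type*} [Group G] (s : ℕ → G) (a b : ℕ) : Subgroup G :=
  Subgroup.closure {x | ∃ t, a ≤ t ∧ t ≤ b ∧ x = s t}

namespace Stmt5Aux

variable {G : Type*} [Group G]

/-- The truncated product `s 1 ^ a 1 * ⋯ * s i ^ a i`. -/
def P (s : ℕ → G) (a : ℕ → ℕ) (i : ℕ) : G :=
  ((List.range i).map (fun k => s (k + 1) ^ a (k + 1))).prod

lemma P_succ (s : ℕ → G) (a : ℕ → ℕ) (i : ℕ) :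
    P s a (i + 1) = P s a i * s (i + 1) ^ a (i + 1) := by
  simp [P, List.range_succ]

lemma rangeClosure_empty (s : ℕ → G) {a b : ℕ} (h : b < a) :
    rangeClosure s a b = ⊥ := by
  have hset : {x | ∃ t, a ≤ t ∧ t ≤ b ∧ x = s t} = (∅ : Set G) := by
    ext x
    simp only [Set.mem_setOf_eq, Set.mem_empty_iff_false, iff_false]
    rintro ⟨t, h1, h2, -⟩; omega
  rw [rangeClosure, hset, Subgroup.closure_empty]

lemma P_mem (s : ℕ → G) (a : ℕ → ℕ) (i : ℕ) : P s a i ∈ rangeClosure s 1 i := by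
  induction i with
  | zero => simpa [P] using one_mem _
  | succ i ih =>
    rw [P_succ]
    refine mul_mem (Subgroup.closure_mono ?_ ih) (pow_mem ?_ _)
    · rintro x ⟨t, h1, h2, rfl⟩; exact ⟨t, h1, by omega, rfl⟩
    · apply Subgroup.subset_closure
      exact ⟨i + 1, by omega, by omega, rfl⟩

lemma key (s : ℕ → G) (p : ℕ → ℕ) (m : ℕ)
    (horder : ∀ i, 1 ≤ i → i ≤ m → orderOf (s i) = p i)
    (hbot : ∀ i, i + 1 ≤ m →
      rangeClosure s 1 i ⊓ rangeClosure s (i + 1) (i + 1) = ⊥) :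
    ∀ i, i ≤ m → ∀ a b : ℕ → ℕ,
      (∀ j, 1 ≤ j → j ≤ i → a j < p j) → (∀ j, 1 ≤ j → j ≤ i → b j < p j) →
      P s a i = P s b i → ∀ j, 1 ≤ j → j ≤ i → a j = b j := by
  intro i
  induction i with
  | zero => intro _ a b _ _ _ j h1 h2; omega
  | succ i ih =>
    intro him a b ha hb heq j hj1 hj2
    rw [P_succ, P_succ] at heq
    have hu : s (i + 1) ∈ rangeClosure s (i + 1) (i + 1) := by
      apply Subgroup.subset_closure
      exact ⟨i + 1, le_rfl, le_rfl, rfl⟩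
    have h2 : (P s b i)⁻¹ * P s a i
        = s (i + 1) ^ b (i + 1) * (s (i + 1) ^ a (i + 1))⁻¹ := by
      rw [inv_mul_eq_iff_eq_mul, ← mul_assoc, ← heq, mul_assoc]
      simp
    have hmem : (P s b i)⁻¹ * P s a i
        ∈ rangeClosure s 1 i ⊓ rangeClosure s (i + 1) (i + 1) :=
      Subgroup.mem_inf.mpr
        ⟨mul_mem (inv_mem (P_mem s b i)) (P_mem s a i), by
          rw [h2]; exact mul_mem (pow_mem hu _) (inv_mem (pow_mem hu _))⟩
    rw [hbot i him] at hmem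
    have hPP : P s a i = P s b i := by
      have h1 := Subgroup.mem_bot.mp hmem
      rw [inv_mul_eq_one] at h1
      exact h1.symm
    have hpow : s (i + 1) ^ a (i + 1) = s (i + 1) ^ b (i + 1) := by
      rw [hPP] at heq; exact mul_left_cancel heq
    rcases Nat.lt_or_ge j (i + 1) with h | h
    · exact ih (by omega) a b (fun j h1 h2 => ha j h1 (by omega))
        (fun j h1 h2 => hb j h1 (by omega)) hPP j hj1 (by omega)
    · have hji : j = i + 1 := by omega
      subst hji
      have horder' : orderOf (s (i + 1)) = p (i + 1) := horder (i + 1) (by omega) him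
      exact pow_injOn_Iio_orderOf
        (by rw [horder']; exact Set.mem_Iio.mpr (ha _ (by omega) le_rfl))
        (by rw [horder']; exact Set.mem_Iio.mpr (hb _ (by omega) le_rfl)) hpow

lemma prod_Icc_one (p : ℕ → ℕ) (m : ℕ) :
    ∏ i ∈ Finset.Icc 1 m, p i = ∏ i ∈ Finset.range m, p (i + 1) := by
  induction m with
  | zero => simp
  | succ m ih =>
    rw [Finset.prod_Icc_succ_top (by omega), ih, Finset.prod_range_succ]

end Stmt5Aux

open Stmt5Aux in
theorem stmt_5 {G : Type*} [Group G] [Finite G] (m : ℕ) (s : ℕ → G) (p : ℕ → ℕ)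
    (horder : ∀ i, 1 ≤ i → i ≤ m → orderOf (s i) = p i)
    (hgen : rangeClosure s 1 m = ⊤)
    (hint : ∀ i j, 2 ≤ j → j ≤ i + 1 → i + 1 ≤ m →
      rangeClosure s 1 i ⊓ rangeClosure s j (i + 1) = rangeClosure s j i) :
    Nat.card G = ∏ i ∈ Finset.Icc 1 m, p i ↔
      ∀ g : G, ∃ a : ℕ → ℕ,
        g = ((List.range m).map (fun i => s (i + 1) ^ a (i + 1))).prod := by
  classical
  have hpos : ∀ j, 1 ≤ j → j ≤ m → 0 < p j := fun j h1 h2 => by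
    rw [← horder j h1 h2]; exact orderOf_pos _
  haveI hNZ : ∀ k : Fin m, NeZero (p (k.1 + 1)) := fun k =>
    ⟨(hpos _ (by omega) (by omega)).ne'⟩
  have hbot : ∀ i, i + 1 ≤ m →
      rangeClosure s 1 i ⊓ rangeClosure s (i + 1) (i + 1) = ⊥ := by
    intro i him
    rcases Nat.eq_zero_or_pos i with rfl | hi
    · rw [rangeClosure_empty s (by omega : (0:ℕ) < 1), bot_inf_eq]
    · rw [hint i (i + 1) (by omega) le_rfl him, rangeClosure_empty s (by omega)]
  -- conversion of a tuple of `ZMod` exponents into an exponent function `ℕ → ℕ`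
  set e : (∀ k : Fin m, ZMod (p (k.1 + 1))) → ℕ → ℕ :=
    fun A j => if h : 1 ≤ j ∧ j ≤ m then (A ⟨j - 1, by omega⟩).val else 0 with he
  set F : (∀ k : Fin m, ZMod (p (k.1 + 1))) → G := fun A => P s (e A) m with hF
  have heval : ∀ (A : ∀ k : Fin m, ZMod (p (k.1 + 1))) (k : Fin m),
      e A (k.1 + 1) = (A k).val := by
    intro A k
    simp only [he]
    rw [dif_pos (show 1 ≤ k.1 + 1 ∧ k.1 + 1 ≤ m from ⟨by omega, by omega⟩)]
    rfl
  have hebound : ∀ (A : ∀ k : Fin m, ZMod (p (k.1 + 1))) j, 1 ≤ j → j ≤ m →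
      e A j < p j := by
    intro A j h1 h2
    simp only [he]
    rw [dif_pos (⟨h1, h2⟩ : 1 ≤ j ∧ j ≤ m)]
    haveI : NeZero (p ((⟨j - 1, by omega⟩ : Fin m).1 + 1)) := hNZ _
    exact lt_of_lt_of_eq (ZMod.val_lt _) (congrArg p (by omega))
  have hFinj : Function.Injective F := by
    intro A B hAB
    have hkey := key s p m horder hbot m le_rfl (e A) (e B)
      (fun j h1 h2 => hebound A j h1 h2) (fun j h1 h2 => hebound B j h1 h2) hAB
    funext k
    have hk := hkey (k.1 + 1) (by omega) (by omega)
    rw [heval A k, heval B k] at hk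
    exact ZMod.val_injective _ hk
  have hFrange : ∀ x : G, (∃ A, F A = x) ↔ ∃ a : ℕ → ℕ, x = P s a m := by
    intro x
    constructor
    · rintro ⟨A, rfl⟩; exact ⟨e A, rfl⟩
    · rintro ⟨a, rfl⟩
      refine ⟨fun k => ((a (k.1 + 1) : ℕ) : ZMod (p (k.1 + 1))), ?_⟩
      show P s (e (fun k : Fin m => ((a (k.1 + 1) : ℕ) : ZMod (p (k.1 + 1))))) m = P s a m
      unfold P
      refine congrArg List.prod (List.map_congr_left ?_)
      intro k hk
      rw [List.mem_range] at hk
      haveI : NeZero (p (k + 1)) := ⟨(hpos _ (by omega) (by omega)).ne'⟩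
      have h2 := heval (fun k : Fin m => ((a (k.1 + 1) : ℕ) : ZMod (p (k.1 + 1)))) ⟨k, hk⟩
      have h1 : e (fun k : Fin m => ((a (k.1 + 1) : ℕ) : ZMod (p (k.1 + 1)))) (k + 1)
          = a (k + 1) % p (k + 1) := h2.trans (ZMod.val_natCast _ _)
      rw [h1, ← horder (k + 1) (by omega) (by omega), pow_mod_orderOf]
  have hcarddom : Nat.card (∀ k : Fin m, ZMod (p (k.1 + 1)))
      = ∏ i ∈ Finset.Icc 1 m, p i := by
    rw [Nat.card_pi]
    simp only [Nat.card_zmod]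
    rw [prod_Icc_one, ← Fin.prod_univ_eq_prod_range (fun i => p (i + 1)) m]
  haveI : Finite (∀ k : Fin m, ZMod (p (k.1 + 1))) := by
    haveI : ∀ k : Fin m, Fintype (ZMod (p (k.1 + 1))) := fun k => ZMod.fintype _
    infer_instance
  constructor
  · intro hcard g
    have hbij : Function.Bijective F :=
      (Nat.bijective_iff_injective_and_card F).mpr ⟨hFinj, by rw [hcarddom, hcard]⟩
    obtain ⟨A, hA⟩ := hbij.2 g
    exact (hFrange g).mp ⟨A, hA⟩
  · intro hprod
    have hsurj : Function.Surjective F := fun x => (hFrange x).mpr (hprod x)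
    exact (Nat.card_eq_of_bijective F ⟨hFinj, hsurj⟩).symm.trans hcarddom
end

section
/- Let Γ = ⟨σ₁, σ₂, σ₃⟩ be a group with (σ₁σ₂)² = (σ₂σ₃)² = (σ₁σ₃)² = (σ₁σ₂σ₃)² = 1, and suppose the relations σ₂²σ₁ = σ₁σ₂^{2t}, σ₃⁻¹σ₂ = σ₂ᵃσ₃ᶜ, and σ₃σ₂⁻¹ = σ₂ᵇσ₃⁻ᶜ hold, where b is odd. Then σ₂^{2t+2}σ₃ = σ₃σ₂^{−t(b+1)−1+a}. -/
theorem stmt_9 {G : Type*} [Group G] (s1 s2 s3 : G)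
    (hgen : Subgroup.closure {s1, s2, s3} = ⊤)
    (h12 : (s1 * s2) ^ 2 = 1) (h23 : (s2 * s3) ^ 2 = 1)
    (h13 : (s1 * s3) ^ 2 = 1) (h123 : (s1 * s2 * s3) ^ 2 = 1)
    (t a b c : ℤ) (hb : Odd b)
    (r1 : s2 ^ 2 * s1 = s1 * s2 ^ (2 * t))
    (r2 : s3⁻¹ * s2 = s2 ^ a * s3 ^ c)
    (r3 : s3 * s2⁻¹ = s2 ^ b * s3 ^ (-c)) :
    s2 ^ (2 * t + 2) * s3 = s3 * s2 ^ (-t * (b + 1) - 1 + a) := by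
  -- basic involutions
  have h12' : s2 * s1 * s2 = s1⁻¹ := by
    have h : s1 * (s2 * s1 * s2) = 1 := by rw [← h12, sq]; group
    exact eq_inv_of_mul_eq_one_right h
  have h13' : s3 * s1 * s3 = s1⁻¹ := by
    have h : s1 * (s3 * s1 * s3) = 1 := by rw [← h13, sq]; group
    exact eq_inv_of_mul_eq_one_right h
  have h31 : s3 * s1 = s1⁻¹ * s3⁻¹ := by rw [← h13']; group
  -- conjugation of s2 by s3
  have hphi : s3⁻¹ * s2 * s3 = s1 * s2⁻¹ * s1⁻¹ := by
    have h : s1 * (s2 * (s3 * s1) * s2 * s3) = 1 := by rw [← h123, sq]; group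
    rw [h31] at h
    have h2 : s2 * (s1⁻¹ * s3⁻¹) * s2 * s3 = s1⁻¹ := eq_inv_of_mul_eq_one_right h
    calc s3⁻¹ * s2 * s3 = s1 * s2⁻¹ * (s2 * (s1⁻¹ * s3⁻¹) * s2 * s3) := by group
      _ = s1 * s2⁻¹ * s1⁻¹ := by rw [h2]
  have key : ∀ n : ℤ, s3⁻¹ * s2 ^ n * s3 = s1 * s2 ^ (-n) * s1⁻¹ := by
    intro n
    have c1 : (s3⁻¹ * s2 * (s3⁻¹)⁻¹) ^ n = s3⁻¹ * s2 ^ n * (s3⁻¹)⁻¹ := conj_zpow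
    rw [inv_inv] at c1
    have c2 : (s1 * s2⁻¹ * s1⁻¹) ^ n = s1 * (s2⁻¹) ^ n * s1⁻¹ := conj_zpow
    rw [← c1, hphi, c2, inv_zpow, ← zpow_neg]
  -- r1 with integer exponent
  have r1' : s2 ^ (2 : ℤ) * s1 = s1 * s2 ^ (2 * t) := by
    rw [show ((2 : ℤ)) = ((2 : ℕ) : ℤ) by norm_num, zpow_natCast]; exact r1
  -- conjugation by s1 (other side)
  have e1 : s2 ^ (2 : ℤ) * s1⁻¹ = s1⁻¹ * s2 ^ (2 * t) := by
    calc s2 ^ (2 : ℤ) * s1⁻¹ = s2 * (s2 ^ (2 : ℤ) * s1) * s2 := by rw [← h12']; group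
      _ = s2 * (s1 * s2 ^ (2 * t)) * s2 := by rw [r1']
      _ = (s2 * s1 * s2) * s2 ^ (2 * t) := by group
      _ = s1⁻¹ * s2 ^ (2 * t) := by rw [h12']
  have E1 : s1 * s2 ^ (2 : ℤ) * s1⁻¹ = s2 ^ (2 * t) := by
    rw [mul_assoc, e1]; group
  have E1pow : ∀ k : ℤ, s1 * s2 ^ (2 * k) * s1⁻¹ = s2 ^ (2 * t * k) := by
    intro k
    have c : (s1 * s2 ^ (2 : ℤ) * s1⁻¹) ^ k = s1 * (s2 ^ (2 : ℤ)) ^ k * s1⁻¹ :=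
      conj_zpow
    rw [E1] at c
    rw [zpow_mul s2 2 k, ← c, ← zpow_mul]
  -- s2 ^ (2 t t) = s2 ^ 2
  have hA : s2 ^ (2 * t * t) = s2 ^ (2 : ℤ) := by
    rw [← E1pow t]
    have h5 : s1⁻¹ * s2 ^ (2 : ℤ) * s1 = s2 ^ (2 * t) := by rw [mul_assoc, r1']; group
    rw [← h5]; group
  -- step 4 : s1 * s2^(b-1) * s1⁻¹ = s2^(a+1)
  have hc : s2 ^ (-a) * (s3⁻¹ * s2) = s3 ^ c := by rw [r2]; group
  have hc' : s2 ^ (-b) * (s3 * s2⁻¹) = s3 ^ (-c) := by rw [r3]; group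
  have hstep : (s2 ^ (-a) * (s3⁻¹ * s2)) * (s2 ^ (-b) * (s3 * s2⁻¹)) = 1 := by
    rw [hc, hc']; group
  have h4 : s2 ^ (-a) * (s3⁻¹ * s2 ^ (1 - b) * s3) * s2⁻¹ = 1 := by
    rw [← hstep]; group
  rw [key (1 - b), show (-(1 - b) : ℤ) = b - 1 by ring] at h4
  have step4 : s1 * s2 ^ (b - 1) * s1⁻¹ = s2 ^ (a + 1) := by
    calc s1 * s2 ^ (b - 1) * s1⁻¹
        = s2 ^ a * (s2 ^ (-a) * (s1 * s2 ^ (b - 1) * s1⁻¹) * s2⁻¹) * s2 := by group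
      _ = s2 ^ a * 1 * s2 := by rw [h4]
      _ = s2 ^ (a + 1) := by group
  -- torsion facts
  obtain ⟨k, hk⟩ := hb
  have hz2 : s2 ^ (t * (b - 1)) = s2 ^ (a + 1) := by
    rw [show t * (b - 1) = 2 * t * k by rw [hk]; ring, ← E1pow k,
      show (2 * k : ℤ) = b - 1 by rw [hk]; ring]
    exact step4
  have H1 : s2 ^ (2 * t * t - 2 : ℤ) = 1 := by
    rw [zpow_sub, hA]; group
  have H2 : s2 ^ (t * b - t - a - 1 : ℤ) = 1 := by
    rw [show (t * b - t - a - 1 : ℤ) = t * (b - 1) - (a + 1) by ring, zpow_sub, hz2]; group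
  -- main computation
  have main : s3⁻¹ * s2 ^ (2 * t + 2) * s3 = s2 ^ (-t * (b + 1) - 1 + a) := by
    rw [key (2 * t + 2), show (-(2 * t + 2) : ℤ) = 2 * (-(t + 1)) by ring,
      E1pow (-(t + 1))]
    have hprod : s2 ^ (2 * t * (-(t + 1))) =
        s2 ^ (-t * (b + 1) - 1 + a) * (s2 ^ (t * b - t - a - 1 : ℤ) *
          (s2 ^ (2 * t * t - 2 : ℤ))⁻¹) := by
      rw [← zpow_neg, ← zpow_add, ← zpow_add]
      congr 1
      ring
    rw [hprod, H1, H2]; group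
  rw [← main]; group
end

section
/- Let m be an odd prime, α ≥ 2, D = k·m^{α−1} with 1 ≤ k ≤ m−1. Define permutations π₁, π₂, π₃ of ℤ_{m^α} × ℤ_{2m} by: (b,c)π₁ = (b̄ + (c/2)D, −c) if c is even and (b̄ + 2 − ((c−1)/2)D, 2−c) if c is odd; (b,c)π₂ = (b + 1 + (c/2)D, c) if c is even and (b − 1 − ((c−1)/2)D, c−2) if c is odd; (b,c)π₃ = (b, c+1); where b̄ = −b + (b(b−1)/2)D. Then (π₁π₂)² = id, (π₂π₃)² = id, and (π₁π₂π₃)² = id. -/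
/-- `D = k·m^(α-1)` as an element of `ℤ_{m^α}`. -/
def Dval (m α k : ℕ) : ZMod (m ^ α) := ((k * m ^ (α - 1) : ℕ) : ZMod (m ^ α))

/-- The map `b ↦ b̄ = -b + (b(b-1)/2)·D` on `ℤ_{m^α}`. -/
def barMap (m α k : ℕ) (b : ZMod (m ^ α)) : ZMod (m ^ α) :=
  -b + b * (b - 1) * (2 : ZMod (m ^ α))⁻¹ * Dval m α k

/-- The permutation `π₁` of `ℤ_{m^α} × ℤ_{2m}`. -/
def piOne (m α k : ℕ) : ZMod (m ^ α) × ZMod (2 * m) → ZMod (m ^ α) × ZMod (2 * m) :=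
  fun x =>
    if Even x.2.val then
      (barMap m α k x.1 + ((x.2.val / 2 : ℕ) : ZMod (m ^ α)) * Dval m α k, -x.2)
    else
      (barMap m α k x.1 + 2 - (((x.2.val - 1) / 2 : ℕ) : ZMod (m ^ α)) * Dval m α k, 2 - x.2)

/-- The permutation `π₂` of `ℤ_{m^α} × ℤ_{2m}`. -/
def piTwo (m α k : ℕ) : ZMod (m ^ α) × ZMod (2 * m) → ZMod (m ^ α) × ZMod (2 * m) :=
  fun x =>
    if Even x.2.val then
      (x.1 + 1 + ((x.2.val / 2 : ℕ) : ZMod (m ^ α)) * Dval m α k, x.2)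
    else
      (x.1 - 1 - (((x.2.val - 1) / 2 : ℕ) : ZMod (m ^ α)) * Dval m α k, x.2 - 2)

/-- The permutation `π₃` of `ℤ_{m^α} × ℤ_{2m}`. -/
def piThree (m α k : ℕ) : ZMod (m ^ α) × ZMod (2 * m) → ZMod (m ^ α) × ZMod (2 * m) :=
  fun x => (x.1, x.2 + 1)

section helpers

lemma Dval_sq (m α k : ℕ) (hα : 2 ≤ α) : Dval m α k * Dval m α k = 0 := by
  unfold Dval
  rw [← Nat.cast_mul, ZMod.natCast_eq_zero_iff]
  have h1 : m ^ α ∣ m ^ (α - 1) * m ^ (α - 1) := by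
    rw [← pow_add]; exact pow_dvd_pow m (by omega)
  have h2 : m ^ (α-1) * m ^ (α-1) ∣ k * m ^ (α - 1) * (k * m ^ (α - 1)) :=
    mul_dvd_mul (dvd_mul_left _ k) (dvd_mul_left _ k)
  exact h1.trans h2

lemma m_mul_Dval (m α k : ℕ) (hα : 2 ≤ α) : (m : ZMod (m ^ α)) * Dval m α k = 0 := by
  unfold Dval
  rw [← Nat.cast_mul, ZMod.natCast_eq_zero_iff]
  calc m ^ α ∣ m * m ^ (α - 1) := by rw [← pow_succ']; exact pow_dvd_pow m (by omega)
    _ ∣ m * (k * m ^ (α - 1)) := mul_dvd_mul_left m (dvd_mul_left _ k)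

lemma bar_bar (m α k : ℕ) (hα : 2 ≤ α) (b : ZMod (m ^ α)) :
    barMap m α k (barMap m α k b + 1) = b - 1 := by
  have hDD := Dval_sq m α k hα
  unfold barMap
  set D := Dval m α k
  set i := (2 : ZMod (m ^ α))⁻¹
  linear_combination ((1 - 2*b) * (b*(b-1)*i) * i + (b*(b-1)*i)^2 * i * D) * hDD

lemma mod2m {m : ℕ} (x r : ℕ) (h : x = r ∨ x = 2*m + r) (hr : r < 2*m) :
    x % (2*m) = r := by
  rcases h with h | h <;> subst h
  · exact Nat.mod_eq_of_lt hr
  · rw [Nat.add_mod_left]; exact Nat.mod_eq_of_lt hr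

lemma v_add_nat {m : ℕ} (hm3 : 3 ≤ m) (c : ZMod (2*m)) (a : ℕ) :
    (c + (a : ZMod (2*m))).val = (c.val + a) % (2*m) := by
  haveI : NeZero (2*m) := ⟨by omega⟩
  rw [ZMod.val_add, ZMod.val_natCast, Nat.add_mod c.val a,
    Nat.mod_eq_of_lt (ZMod.val_lt c)]

lemma v_neg {m : ℕ} (hm3 : 3 ≤ m) (c : ZMod (2*m)) (hc : c.val ≠ 0) :
    (-c).val = 2*m - c.val := by
  haveI : NeZero (2*m) := ⟨by omega⟩
  have h0 : c ≠ 0 := fun h => hc (by simp [h])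
  rw [ZMod.neg_val, if_neg h0]

lemma v_add_one {m : ℕ} (hm3 : 3 ≤ m) (c : ZMod (2*m)) :
    (c + 1).val = (c.val + 1) % (2*m) := by
  haveI : NeZero (2*m) := ⟨by omega⟩
  haveI : Fact (1 < 2*m) := ⟨by omega⟩
  rw [ZMod.val_add, ZMod.val_one]

lemma v_sub_one {m : ℕ} (hm3 : 3 ≤ m) (c : ZMod (2*m)) (hc : c.val ≠ 0) :
    (c - 1).val = c.val - 1 := by
  haveI : NeZero (2*m) := ⟨by omega⟩
  haveI : Fact (1 < 2*m) := ⟨by omega⟩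
  rw [ZMod.val_sub (by rw [ZMod.val_one]; omega), ZMod.val_one]

lemma v_sub_two {m : ℕ} (hm3 : 3 ≤ m) (c : ZMod (2*m)) :
    (c - 2).val = (c.val + (2*m - 2)) % (2*m) := by
  haveI : NeZero (2*m) := ⟨by omega⟩
  have h : c - 2 = c + ((2*m - 2 : ℕ) : ZMod (2*m)) := by
    rw [Nat.cast_sub (by omega), ZMod.natCast_self]
    push_cast
    ring
  rw [h, v_add_nat hm3]

lemma v_two_sub {m : ℕ} (hm3 : 3 ≤ m) (c : ZMod (2*m)) :
    (2 - c).val = ((-c).val + 2) % (2*m) := by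
  haveI : NeZero (2*m) := ⟨by omega⟩
  have h : (2 : ZMod (2*m)) - c = -c + ((2 : ℕ) : ZMod (2*m)) := by push_cast; ring
  rw [h, v_add_nat hm3]

end helpers

theorem stmt_12 (m α k : ℕ) (hm : Nat.Prime m) (hmodd : Odd m) (hα : 2 ≤ α)
    (hk : 1 ≤ k) (hk' : k ≤ m - 1) :
    (∀ x, piTwo m α k (piOne m α k (piTwo m α k (piOne m α k x))) = x) ∧
    (∀ x, piThree m α k (piTwo m α k (piThree m α k (piTwo m α k x))) = x) ∧
    (∀ x, piThree m α k (piTwo m α k (piOne m α k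
        (piThree m α k (piTwo m α k (piOne m α k x))))) = x) := by
  have hm3 : 3 ≤ m := by
    have h2 := hm.two_le
    rcases hmodd with ⟨j, hj⟩
    omega
  haveI : NeZero (2*m) := ⟨by omega⟩
  have hbb := bar_bar m α k hα
  have hmD := m_mul_Dval m α k hα
  have hsum : ∀ a b : ℕ, a + b = m →
      (a : ZMod (m^α)) * Dval m α k + (b : ZMod (m^α)) * Dval m α k = 0 := by
    intro a b hab
    rw [← add_mul, ← Nat.cast_add, hab]
    exact hmD
  refine ⟨?_, ?_, ?_⟩ <;> rintro ⟨b, c⟩ <;>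
    have hlt : c.val < 2*m := ZMod.val_lt c
  -- ==================== Part 1 : (π₁π₂)² = 1 ====================
  · by_cases hc : Even c.val
    · -- c even
      obtain ⟨t, ht⟩ : ∃ t, c.val = 2*t := ⟨c.val / 2, by have := Nat.even_iff.mp hc; omega⟩
      rcases Nat.eq_zero_or_pos t with h0 | h0
      · -- t = 0, i.e. c = 0
        have hc0 : c = 0 := by
          have : c.val = 0 := by omega
          exact (ZMod.val_eq_zero c).mp this
        subst hc0
        simp [piOne, piTwo, hbb]
      · -- t ≥ 1
        have hv : (-c).val = 2*m - 2*t := by rw [v_neg hm3 c (by omega), ht]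
        have s1 : piOne m α k (b, c) =
            (barMap m α k b + (t : ZMod (m^α)) * Dval m α k, -c) := by
          simp only [piOne]
          rw [if_pos hc, show c.val / 2 = t from by omega]
        have s2 : piTwo m α k (barMap m α k b + (t : ZMod (m^α)) * Dval m α k, -c) =
            (barMap m α k b + (t : ZMod (m^α)) * Dval m α k + 1
              + ((m - t : ℕ) : ZMod (m^α)) * Dval m α k, -c) := by
          simp only [piTwo]
          rw [hv, if_pos (by rw [Nat.even_iff]; omega),
            show (2*m - 2*t) / 2 = m - t from by omega]
        have s3 : piOne m α k (barMap m α k b + (t : ZMod (m^α)) * Dval m α k + 1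
              + ((m - t : ℕ) : ZMod (m^α)) * Dval m α k, -c) =
            (b - 1 + ((m - t : ℕ) : ZMod (m^α)) * Dval m α k, c) := by
          have harg : barMap m α k b + (t : ZMod (m^α)) * Dval m α k + 1
              + ((m - t : ℕ) : ZMod (m^α)) * Dval m α k = barMap m α k b + 1 := by
            linear_combination hsum t (m - t) (by omega)
          simp only [piOne]
          rw [hv, if_pos (by rw [Nat.even_iff]; omega), harg, hbb b,
            show (2*m - 2*t) / 2 = m - t from by omega, neg_neg]
        have s4 : piTwo m α k (b - 1 + ((m - t : ℕ) : ZMod (m^α)) * Dval m α k, c) =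
            (b, c) := by
          simp only [piTwo]
          rw [if_pos hc, show c.val / 2 = t from by omega]
          simp only [Prod.mk.injEq]
          exact ⟨by linear_combination hsum t (m - t) (by omega), by trivial⟩
        rw [s1, s2, s3, s4]
    · -- c odd
      have hco : c.val % 2 = 1 := Nat.not_even_iff.mp hc
      obtain ⟨t, ht⟩ : ∃ t, c.val = 2*t + 1 := ⟨c.val / 2, by omega⟩
      have hvneg : (-c).val = 2*m - 2*t - 1 := by rw [v_neg hm3 c (by omega)]; omega
      rcases Nat.eq_zero_or_pos t with h0 | h0
      · -- t = 0 : c.val = 1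
        have hv1 : (2 - c).val = 1 := by
          rw [v_two_sub hm3 c, hvneg]
          exact mod2m _ 1 (by omega) (by omega)
        have hv2 : ((2 : ZMod (2*m)) + c).val = 3 := by
          have h : (2 : ZMod (2*m)) + c = c + ((2:ℕ) : ZMod (2*m)) := by push_cast; ring
          rw [h, v_add_nat hm3]
          exact mod2m _ 3 (by omega) (by omega)
        have s1 : piOne m α k (b, c) = (barMap m α k b + 2, 2 - c) := by
          simp only [piOne]
          rw [if_neg hc, show (c.val - 1) / 2 = 0 from by omega]
          simp only [Prod.mk.injEq]
          exact ⟨by push_cast; ring, by trivial⟩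
        have s2 : piTwo m α k (barMap m α k b + 2, 2 - c) = (barMap m α k b + 1, -c) := by
          simp only [piTwo]
          rw [hv1, if_neg (by rw [Nat.even_iff]; omega)]
          simp only [Prod.mk.injEq]
          exact ⟨by push_cast; ring, by first | trivial | ring⟩
        have s3 : piOne m α k (barMap m α k b + 1, -c) =
            (b + 1 - ((m - 1 : ℕ) : ZMod (m^α)) * Dval m α k, 2 + c) := by
          simp only [piOne]
          rw [hvneg, if_neg (by rw [Nat.even_iff]; omega), hbb b,
            show (2*m - 2*t - 1 - 1) / 2 = m - 1 from by omega]
          simp only [Prod.mk.injEq]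
          exact ⟨by ring, by first | trivial | ring⟩
        have s4 : piTwo m α k (b + 1 - ((m - 1 : ℕ) : ZMod (m^α)) * Dval m α k, 2 + c) =
            (b, c) := by
          simp only [piTwo]
          rw [hv2, if_neg (by rw [Nat.even_iff]; omega),
            show (3 - 1) / 2 = 1 from by norm_num]
          simp only [Prod.mk.injEq]
          exact ⟨by linear_combination - hsum (m-1) 1 (by omega), by first | trivial | ring⟩
        rw [s1, s2, s3, s4]
      · -- t ≥ 1
        have hv1 : (2 - c).val = 2*m + 1 - 2*t := by
          rw [v_two_sub hm3 c, hvneg]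
          exact mod2m _ (2*m + 1 - 2*t) (by omega) (by omega)
        have s1 : piOne m α k (b, c) =
            (barMap m α k b + 2 - (t : ZMod (m^α)) * Dval m α k, 2 - c) := by
          simp only [piOne]
          rw [if_neg hc, show (c.val - 1) / 2 = t from by omega]
        have s2 : piTwo m α k (barMap m α k b + 2 - (t : ZMod (m^α)) * Dval m α k, 2 - c) =
            (barMap m α k b + 1, -c) := by
          simp only [piTwo]
          rw [hv1, if_neg (by rw [Nat.even_iff]; omega),
            show (2*m + 1 - 2*t - 1) / 2 = m - t from by omega]
          simp only [Prod.mk.injEq]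
          exact ⟨by linear_combination - hsum t (m - t) (by omega), by first | trivial | ring⟩
        have s3 : piOne m α k (barMap m α k b + 1, -c) =
            (b + 1 - ((m - t - 1 : ℕ) : ZMod (m^α)) * Dval m α k, 2 + c) := by
          simp only [piOne]
          rw [hvneg, if_neg (by rw [Nat.even_iff]; omega), hbb b,
            show (2*m - 2*t - 1 - 1) / 2 = m - t - 1 from by omega]
          simp only [Prod.mk.injEq]
          exact ⟨by ring, by first | trivial | ring⟩
        rcases Nat.lt_or_ge t (m - 1) with hmt | hmt
        · -- 1 ≤ t ≤ m - 2
          have hv2 : ((2 : ZMod (2*m)) + c).val = 2*t + 3 := by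
            have h : (2 : ZMod (2*m)) + c = c + ((2:ℕ) : ZMod (2*m)) := by push_cast; ring
            rw [h, v_add_nat hm3]
            exact mod2m _ (2*t+3) (by omega) (by omega)
          have s4 : piTwo m α k
              (b + 1 - ((m - t - 1 : ℕ) : ZMod (m^α)) * Dval m α k, 2 + c) = (b, c) := by
            simp only [piTwo]
            rw [hv2, if_neg (by rw [Nat.even_iff]; omega),
              show (2*t + 3 - 1) / 2 = t + 1 from by omega]
            simp only [Prod.mk.injEq]
            exact ⟨by linear_combination - hsum (m - t - 1) (t + 1) (by omega), by first | trivial | ring⟩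
          rw [s1, s2, s3, s4]
        · -- t = m - 1
          have hv2 : ((2 : ZMod (2*m)) + c).val = 1 := by
            have h : (2 : ZMod (2*m)) + c = c + ((2:ℕ) : ZMod (2*m)) := by push_cast; ring
            rw [h, v_add_nat hm3]
            exact mod2m _ 1 (by omega) (by omega)
          have s4 : piTwo m α k
              (b + 1 - ((m - t - 1 : ℕ) : ZMod (m^α)) * Dval m α k, 2 + c) = (b, c) := by
            simp only [piTwo]
            rw [hv2, if_neg (by rw [Nat.even_iff]; omega),
              show (1 - 1) / 2 = 0 from by norm_num,
              show m - t - 1 = 0 from by omega]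
            simp only [Prod.mk.injEq]
            exact ⟨by push_cast; ring, by first | trivial | ring⟩
          rw [s1, s2, s3, s4]
  -- ==================== Part 2 : (π₂π₃)² = 1 ====================
  · by_cases hc : Even c.val
    · obtain ⟨t, ht⟩ : ∃ t, c.val = 2*t := ⟨c.val / 2, by have := Nat.even_iff.mp hc; omega⟩
      have hv1 : (c + 1).val = 2*t + 1 := by
        rw [v_add_one hm3]
        exact mod2m _ (2*t+1) (by omega) (by omega)
      have s1 : piTwo m α k (b, c) = (b + 1 + (t : ZMod (m^α)) * Dval m α k, c) := by
        simp only [piTwo]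
        rw [if_pos hc, show c.val / 2 = t from by omega]
      have s2 : piThree m α k (b + 1 + (t : ZMod (m^α)) * Dval m α k, c) =
          (b + 1 + (t : ZMod (m^α)) * Dval m α k, c + 1) := rfl
      have s3 : piTwo m α k (b + 1 + (t : ZMod (m^α)) * Dval m α k, c + 1) =
          (b, c - 1) := by
        simp only [piTwo]
        rw [hv1, if_neg (by rw [Nat.even_iff]; omega),
          show (2*t + 1 - 1) / 2 = t from by omega]
        simp only [Prod.mk.injEq]
        exact ⟨by ring, by first | trivial | ring⟩
      have s4 : piThree m α k (b, c - 1) = (b, c) := by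
        simp only [piThree]
        rw [sub_add_cancel]
      rw [s1, s2, s3, s4]
    · have hco : c.val % 2 = 1 := Nat.not_even_iff.mp hc
      obtain ⟨t, ht⟩ : ∃ t, c.val = 2*t + 1 := ⟨c.val / 2, by omega⟩
      have hv1 : (c - 1).val = 2*t := by rw [v_sub_one hm3 c (by omega)]; omega
      have s1 : piTwo m α k (b, c) = (b - 1 - (t : ZMod (m^α)) * Dval m α k, c - 2) := by
        simp only [piTwo]
        rw [if_neg hc, show (c.val - 1) / 2 = t from by omega]
      have s2 : piThree m α k (b - 1 - (t : ZMod (m^α)) * Dval m α k, c - 2) =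
          (b - 1 - (t : ZMod (m^α)) * Dval m α k, c - 1) := by
        simp only [piThree, Prod.mk.injEq]
        exact ⟨by trivial, by first | trivial | ring⟩
      have s3 : piTwo m α k (b - 1 - (t : ZMod (m^α)) * Dval m α k, c - 1) =
          (b, c - 1) := by
        simp only [piTwo]
        rw [hv1, if_pos (by rw [Nat.even_iff]; omega), show 2*t / 2 = t from by omega]
        simp only [Prod.mk.injEq]
        exact ⟨by ring, by trivial⟩
      have s4 : piThree m α k (b, c - 1) = (b, c) := by
        simp only [piThree]
        rw [sub_add_cancel]
      rw [s1, s2, s3, s4]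
  -- ==================== Part 3 : (π₁π₂π₃)² = 1 ====================
  · by_cases hc : Even c.val
    · obtain ⟨t, ht⟩ : ∃ t, c.val = 2*t := ⟨c.val / 2, by have := Nat.even_iff.mp hc; omega⟩
      rcases Nat.eq_zero_or_pos t with h0 | h0
      · -- t = 0, c = 0
        have hc0 : c = 0 := by
          have : c.val = 0 := by omega
          exact (ZMod.val_eq_zero c).mp this
        subst hc0
        haveI : Fact (1 < 2*m) := ⟨by omega⟩
        have s1 : piOne m α k (b, (0 : ZMod (2*m))) = (barMap m α k b, 0) := by
          simp only [piOne]
          rw [if_pos (by rw [ZMod.val_zero]; exact Even.zero : Even (0 : ZMod (2*m)).val)]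
          simp only [ZMod.val_zero, Nat.zero_div, Nat.cast_zero, zero_mul, add_zero, neg_zero]
        have s2 : piTwo m α k (barMap m α k b, (0 : ZMod (2*m))) = (barMap m α k b + 1, 0) := by
          simp only [piTwo]
          rw [if_pos (by rw [ZMod.val_zero]; exact Even.zero : Even (0 : ZMod (2*m)).val)]
          simp only [ZMod.val_zero, Nat.zero_div, Nat.cast_zero, zero_mul, add_zero]
        have s3 : piThree m α k (barMap m α k b + 1, (0 : ZMod (2*m))) =
            (barMap m α k b + 1, 1) := by
          simp only [piThree, Prod.mk.injEq]
          exact ⟨by trivial, by first | trivial | ring⟩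
        have s4 : piOne m α k (barMap m α k b + 1, (1 : ZMod (2*m))) = (b + 1, 1) := by
          simp only [piOne]
          rw [ZMod.val_one, if_neg (by rw [Nat.even_iff]; omega), hbb b,
            show (1 - 1) / 2 = 0 from by norm_num]
          simp only [Prod.mk.injEq]
          exact ⟨by push_cast; ring, by first | trivial | ring⟩
        have s5 : piTwo m α k (b + 1, (1 : ZMod (2*m))) = (b, (1 : ZMod (2*m)) - 2) := by
          simp only [piTwo]
          rw [ZMod.val_one, if_neg (by rw [Nat.even_iff]; omega),
            show (1 - 1) / 2 = 0 from by norm_num]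
          simp only [Prod.mk.injEq]
          exact ⟨by push_cast; ring, by trivial⟩
        have s6 : piThree m α k (b, (1 : ZMod (2*m)) - 2) = (b, 0) := by
          simp only [piThree, Prod.mk.injEq]
          exact ⟨by trivial, by first | trivial | ring⟩
        rw [s1, s2, s3, s4, s5, s6]
      · -- t ≥ 1
        have hv : (-c).val = 2*m - 2*t := by rw [v_neg hm3 c (by omega), ht]
        have hv1 : (-c + 1).val = 2*m - 2*t + 1 := by
          rw [v_add_one hm3, hv]
          exact mod2m _ (2*m - 2*t + 1) (by omega) (by omega)
        have hv2 : (c + 1).val = 2*t + 1 := by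
          rw [v_add_one hm3]
          exact mod2m _ (2*t + 1) (by omega) (by omega)
        have s1 : piOne m α k (b, c) =
            (barMap m α k b + (t : ZMod (m^α)) * Dval m α k, -c) := by
          simp only [piOne]
          rw [if_pos hc, show c.val / 2 = t from by omega]
        have s2 : piTwo m α k (barMap m α k b + (t : ZMod (m^α)) * Dval m α k, -c) =
            (barMap m α k b + 1, -c) := by
          simp only [piTwo]
          rw [hv, if_pos (by rw [Nat.even_iff]; omega),
            show (2*m - 2*t) / 2 = m - t from by omega]
          simp only [Prod.mk.injEq]
          exact ⟨by linear_combination hsum t (m - t) (by omega), by trivial⟩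
        have s3 : piThree m α k (barMap m α k b + 1, -c) = (barMap m α k b + 1, -c + 1) := rfl
        have s4 : piOne m α k (barMap m α k b + 1, -c + 1) =
            (b + 1 - ((m - t : ℕ) : ZMod (m^α)) * Dval m α k, c + 1) := by
          simp only [piOne]
          rw [hv1, if_neg (by rw [Nat.even_iff]; omega), hbb b,
            show (2*m - 2*t + 1 - 1) / 2 = m - t from by omega]
          simp only [Prod.mk.injEq]
          exact ⟨by ring, by first | trivial | ring⟩
        have s5 : piTwo m α k (b + 1 - ((m - t : ℕ) : ZMod (m^α)) * Dval m α k, c + 1) =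
            (b, c - 1) := by
          simp only [piTwo]
          rw [hv2, if_neg (by rw [Nat.even_iff]; omega),
            show (2*t + 1 - 1) / 2 = t from by omega]
          simp only [Prod.mk.injEq]
          exact ⟨by linear_combination - hsum t (m - t) (by omega), by first | trivial | ring⟩
        have s6 : piThree m α k (b, c - 1) = (b, c) := by
          simp only [piThree]
          rw [sub_add_cancel]
        rw [s1, s2, s3, s4, s5, s6]
    · -- c odd
      have hco : c.val % 2 = 1 := Nat.not_even_iff.mp hc
      obtain ⟨t, ht⟩ : ∃ t, c.val = 2*t + 1 := ⟨c.val / 2, by omega⟩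
      have hvneg : (-c).val = 2*m - 2*t - 1 := by rw [v_neg hm3 c (by omega)]; omega
      have hvm1 : (c - 1).val = 2*t := by rw [v_sub_one hm3 c (by omega)]; omega
      rcases Nat.eq_zero_or_pos t with h0 | h0
      · -- t = 0 : c.val = 1
        have hv1 : (2 - c).val = 1 := by
          rw [v_two_sub hm3 c, hvneg]
          exact mod2m _ 1 (by omega) (by omega)
        have hv2 : (-c + 1).val = 0 := by
          rw [v_add_one hm3, hvneg]
          exact mod2m _ 0 (by omega) (by omega)
        have s1 : piOne m α k (b, c) = (barMap m α k b + 2, 2 - c) := by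
          simp only [piOne]
          rw [if_neg hc, show (c.val - 1) / 2 = 0 from by omega]
          simp only [Prod.mk.injEq]
          exact ⟨by push_cast; ring, by trivial⟩
        have s2 : piTwo m α k (barMap m α k b + 2, 2 - c) = (barMap m α k b + 1, -c) := by
          simp only [piTwo]
          rw [hv1, if_neg (by rw [Nat.even_iff]; omega)]
          simp only [Prod.mk.injEq]
          exact ⟨by push_cast; ring, by first | trivial | ring⟩
        have s3 : piThree m α k (barMap m α k b + 1, -c) = (barMap m α k b + 1, -c + 1) := rfl
        have s4 : piOne m α k (barMap m α k b + 1, -c + 1) = (b - 1, c - 1) := by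
          simp only [piOne]
          rw [hv2, if_pos (by rw [Nat.even_iff]), hbb b]
          simp only [Prod.mk.injEq]
          exact ⟨by push_cast; ring, by first | trivial | ring⟩
        have s5 : piTwo m α k (b - 1, c - 1) = (b, c - 1) := by
          simp only [piTwo]
          rw [hvm1, if_pos (by rw [Nat.even_iff]; omega)]
          simp only [Prod.mk.injEq]
          refine ⟨by rw [show 2*t/2 = 0 from by omega]; push_cast; ring, by trivial⟩
        have s6 : piThree m α k (b, c - 1) = (b, c) := by
          simp only [piThree]
          rw [sub_add_cancel]
        rw [s1, s2, s3, s4, s5, s6]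
      · -- t ≥ 1
        have hv1 : (2 - c).val = 2*m + 1 - 2*t := by
          rw [v_two_sub hm3 c, hvneg]
          exact mod2m _ (2*m + 1 - 2*t) (by omega) (by omega)
        have hv2 : (-c + 1).val = 2*m - 2*t := by
          rw [v_add_one hm3, hvneg]
          exact mod2m _ (2*m - 2*t) (by omega) (by omega)
        have s1 : piOne m α k (b, c) =
            (barMap m α k b + 2 - (t : ZMod (m^α)) * Dval m α k, 2 - c) := by
          simp only [piOne]
          rw [if_neg hc, show (c.val - 1) / 2 = t from by omega]
        have s2 : piTwo m α k (barMap m α k b + 2 - (t : ZMod (m^α)) * Dval m α k, 2 - c) =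
            (barMap m α k b + 1, -c) := by
          simp only [piTwo]
          rw [hv1, if_neg (by rw [Nat.even_iff]; omega),
            show (2*m + 1 - 2*t - 1) / 2 = m - t from by omega]
          simp only [Prod.mk.injEq]
          exact ⟨by linear_combination - hsum t (m - t) (by omega), by first | trivial | ring⟩
        have s3 : piThree m α k (barMap m α k b + 1, -c) = (barMap m α k b + 1, -c + 1) := rfl
        have s4 : piOne m α k (barMap m α k b + 1, -c + 1) =
            (b - 1 + ((m - t : ℕ) : ZMod (m^α)) * Dval m α k, c - 1) := by
          simp only [piOne]
          rw [hv2, if_pos (by rw [Nat.even_iff]; omega), hbb b,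
            show (2*m - 2*t) / 2 = m - t from by omega]
          simp only [Prod.mk.injEq]
          exact ⟨by trivial, by first | trivial | ring⟩
        have s5 : piTwo m α k (b - 1 + ((m - t : ℕ) : ZMod (m^α)) * Dval m α k, c - 1) =
            (b, c - 1) := by
          simp only [piTwo]
          rw [hvm1, if_pos (by rw [Nat.even_iff]; omega), show 2*t / 2 = t from by omega]
          simp only [Prod.mk.injEq]
          exact ⟨by linear_combination hsum t (m - t) (by omega), by trivial⟩
        have s6 : piThree m α k (b, c - 1) = (b, c) := by
          simp only [piThree]
          rw [sub_add_cancel]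
        rw [s1, s2, s3, s4, s5, s6]
end

section
/- Let Γ = ⟨σ₁, σ₂, σ₃⟩ with (σ₁σ₂)² = (σ₂σ₃)² = (σ₁σ₂σ₃)² = 1, σ₂ of order m^α (m an odd prime, α ≥ 2), and suppose σ₂σ₁² = σ₁²σ₂^{1+k₁m^{α−1}} and σ₃²σ₂ = σ₂^{1+k₂m^{α−1}}σ₃² with 1 ≤ k₁, k₂ ≤ m−1. Then conjugation by σ₁ inverts σ₂^{m^{α−1}}, i.e. σ₁⁻¹σ₂^{m^{α−1}}σ₁ = σ₂^{−m^{α−1}}. -/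
theorem stmt_14 {G : Type*} [Group G] (s1 s2 s3 : G) (m α k1 k2 : ℕ)
    (hm : Nat.Prime m) (hmodd : Odd m) (hα : 2 ≤ α)
    (hk1 : 1 ≤ k1) (hk1' : k1 ≤ m - 1) (hk2 : 1 ≤ k2) (hk2' : k2 ≤ m - 1)
    (hgen : Subgroup.closure {s1, s2, s3} = ⊤)
    (h12 : (s1 * s2) ^ 2 = 1) (h23 : (s2 * s3) ^ 2 = 1)
    (h123 : (s1 * s2 * s3) ^ 2 = 1)
    (hq : orderOf s2 = m ^ α)
    (r1 : s2 * s1 ^ 2 = s1 ^ 2 * s2 ^ (1 + k1 * m ^ (α - 1)))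
    (r2 : s3 ^ 2 * s2 = s2 ^ (1 + k2 * m ^ (α - 1)) * s3 ^ 2) :
    s1⁻¹ * s2 ^ (m ^ (α - 1)) * s1 = (s2 ^ (m ^ (α - 1)))⁻¹ := by
  set N : ℕ := m ^ (α - 1) with hNd
  set q : ℕ := m ^ α with hqd
  set t : ℕ := k1 * N with htd
  set u : G := s1 ^ 2 with hu
  -- basic arithmetic facts
  have hNN : q ∣ N * N := by
    rw [hNd, hqd, ← pow_add]
    exact pow_dvd_pow m (by omega)
  have htt : q ∣ t * t := by
    rw [show t * t = (k1 * k1) * (N * N) by rw [htd]; ring]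
    exact hNN.mul_left _
  have hqodd : Odd q := hmodd.pow
  have hco2 : Nat.gcd q 2 = 1 := by
    have h2 : ¬ 2 ∣ q := by
      have := Nat.odd_iff.mp hqodd
      omega
    exact Nat.Coprime.symm ((Nat.prime_two.coprime_iff_not_dvd).mpr h2)
  have cancel2 : ∀ {x y : ℕ}, 2 * x ≡ 2 * y [MOD q] → x ≡ y [MOD q] :=
    fun h => Nat.ModEq.cancel_left_of_coprime hco2 h
  have spow : ∀ {x y : ℕ}, x ≡ y [MOD q] → s2 ^ x = s2 ^ y := by
    intro x y h
    rw [pow_eq_pow_iff_modEq, hq]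
    exact h
  have hs2q : s2 ^ q = 1 := by rw [← hq]; exact pow_orderOf_eq_one s2
  -- group-theoretic basic facts
  have conjpow : ∀ (x : G) (n : ℕ), (s1⁻¹ * x * s1) ^ n = s1⁻¹ * x ^ n * s1 := by
    intro x n
    induction n with
    | zero => simp
    | succ k ih => rw [pow_succ, ih, pow_succ]; group
  have h12' : s2 * s1 = s1⁻¹ * s2⁻¹ := by
    have h := h12
    rw [pow_two] at h
    calc s2 * s1 = s1⁻¹ * (s1 * s2 * (s1 * s2)) * s2⁻¹ := by group
      _ = s1⁻¹ * 1 * s2⁻¹ := by rw [h]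
      _ = s1⁻¹ * s2⁻¹ := by group
  have A1 : s1⁻¹ * s2 * s1 = u⁻¹ * s2⁻¹ := by
    calc s1⁻¹ * s2 * s1 = s1⁻¹ * (s2 * s1) := by group
      _ = s1⁻¹ * (s1⁻¹ * s2⁻¹) := by rw [h12']
      _ = u⁻¹ * s2⁻¹ := by rw [hu]; group
  have comm_a : ∀ a : ℕ, s2 ^ a * u = u * s2 ^ (a * (1 + t)) := by
    intro a
    induction a with
    | zero => simp
    | succ a ih =>
      calc s2 ^ (a + 1) * u = s2 ^ a * (s2 * u) := by rw [pow_succ]; group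
        _ = s2 ^ a * (u * s2 ^ (1 + t)) := by rw [r1]
        _ = (s2 ^ a * u) * s2 ^ (1 + t) := by group
        _ = u * s2 ^ (a * (1 + t)) * s2 ^ (1 + t) := by rw [ih]
        _ = u * s2 ^ (a * (1 + t) + (1 + t)) := by rw [mul_assoc, ← pow_add]
        _ = u * s2 ^ ((a + 1) * (1 + t)) := by rw [show a * (1+t) + (1+t) = (a+1)*(1+t) by ring]
  have NF : ∀ n : ℕ, ∃ c : ℕ, (s2 * u) ^ n = u ^ n * s2 ^ c ∧
      2 * c ≡ 2 * n + t * (n * (n + 1)) [MOD q] := by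
    intro n
    induction n with
    | zero => exact ⟨0, by simp, by simpa using Nat.ModEq.refl 0⟩
    | succ n ih =>
      obtain ⟨c, hE, hM⟩ := ih
      refine ⟨(c + 1) * (1 + t), ?_, ?_⟩
      · calc (s2 * u) ^ (n + 1) = (s2 * u) ^ n * (s2 * u) := by rw [pow_succ]
          _ = u ^ n * s2 ^ c * (s2 * u) := by rw [hE]
          _ = u ^ n * (s2 ^ (c + 1) * u) := by rw [pow_succ]; group
          _ = u ^ n * (u * s2 ^ ((c + 1) * (1 + t))) := by rw [comm_a (c + 1)]
          _ = u ^ (n + 1) * s2 ^ ((c + 1) * (1 + t)) := by rw [pow_succ]; group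
      · calc 2 * ((c + 1) * (1 + t)) = (2 * c) * (1 + t) + 2 * (1 + t) := by ring
          _ ≡ (2 * n + t * (n * (n + 1))) * (1 + t) + 2 * (1 + t) [MOD q] :=
              Nat.ModEq.add_right _ (hM.mul_right _)
          _ = (2 * (n + 1) + t * ((n + 1) * (n + 1 + 1))) + (t * t) * (n * (n + 1)) := by ring
          _ ≡ (2 * (n + 1) + t * ((n + 1) * (n + 1 + 1))) + 0 [MOD q] :=
              Nat.ModEq.add_left _ (Nat.modEq_zero_iff_dvd.mpr (htt.mul_right _))
          _ = 2 * (n + 1) + t * ((n + 1) * (n + 1 + 1)) := by ring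
  -- conjugating r1 by s1 yields E1
  have hconjr1 : s1⁻¹ * (s2 * u) * s1 = s1⁻¹ * (u * s2 ^ (1 + t)) * s1 := by rw [r1]
  have hL : s1⁻¹ * (s2 * u) * s1 = (s2 * u)⁻¹ * u := by
    calc s1⁻¹ * (s2 * u) * s1 = (s1⁻¹ * s2 * s1) * (s1⁻¹ * u * s1) := by group
      _ = (u⁻¹ * s2⁻¹) * (s1⁻¹ * u * s1) := by rw [A1]
      _ = (u⁻¹ * s2⁻¹) * u := by rw [hu]; group
      _ = (s2 * u)⁻¹ * u := by rw [mul_inv_rev]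
  have hR : s1⁻¹ * (u * s2 ^ (1 + t)) * s1 = u * ((s2 * u) ^ (1 + t))⁻¹ := by
    calc s1⁻¹ * (u * s2 ^ (1 + t)) * s1
        = (s1⁻¹ * u * s1) * (s1⁻¹ * s2 ^ (1 + t) * s1) := by group
      _ = (s1⁻¹ * u * s1) * (s1⁻¹ * s2 * s1) ^ (1 + t) := by rw [conjpow]
      _ = u * (u⁻¹ * s2⁻¹) ^ (1 + t) := by rw [A1, hu]; group
      _ = u * ((s2 * u)⁻¹) ^ (1 + t) := by rw [mul_inv_rev]
      _ = u * ((s2 * u) ^ (1 + t))⁻¹ := by rw [inv_pow]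
  have h7 : (s2 * u)⁻¹ * u = u * ((s2 * u) ^ (1 + t))⁻¹ := by
    rw [← hL, ← hR]; exact hconjr1
  have h10 : u⁻¹ * (s2 * u) = (s2 * u) ^ (1 + t) * u⁻¹ := by
    calc u⁻¹ * (s2 * u) = ((s2 * u)⁻¹ * u)⁻¹ := by group
      _ = (u * ((s2 * u) ^ (1 + t))⁻¹)⁻¹ := by rw [h7]
      _ = (s2 * u) ^ (1 + t) * u⁻¹ := by group
  have E1 : (s2 * u) ^ (1 + t) = s2 ^ (1 + t) * u := by
    calc (s2 * u) ^ (1 + t) = (s2 * u) ^ (1 + t) * u⁻¹ * u := by group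
      _ = u⁻¹ * (s2 * u) * u := by rw [← h10]
      _ = u⁻¹ * (u * s2 ^ (1 + t)) * u := by rw [r1]
      _ = s2 ^ (1 + t) * u := by group
  -- u ^ t = 1
  have hut : u ^ t = 1 := by
    obtain ⟨c, hE, hM⟩ := NF (1 + t)
    have hEq : u ^ (1 + t) * s2 ^ c = u * s2 ^ ((1 + t) * (1 + t)) := by
      rw [← hE, E1, comm_a (1 + t)]
    have hcm : c ≡ (1 + t) * (1 + t) [MOD q] := by
      apply cancel2
      calc 2 * c ≡ 2 * (1 + t) + t * ((1 + t) * ((1 + t) + 1)) [MOD q] := hM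
        _ = 2 * ((1 + t) * (1 + t)) + (t * t) * (1 + t) := by ring
        _ ≡ 2 * ((1 + t) * (1 + t)) + 0 [MOD q] :=
            Nat.ModEq.add_left _ (Nat.modEq_zero_iff_dvd.mpr (htt.mul_right _))
        _ = 2 * ((1 + t) * (1 + t)) := by ring
    rw [spow hcm] at hEq
    have h11 : u ^ (1 + t) = u := mul_right_cancel hEq
    rw [pow_add, pow_one] at h11
    exact mul_left_cancel (h11.trans (mul_one u).symm)
  -- u ^ q = 1
  have huq : u ^ q = 1 := by
    have hXinv : s2 * u = s1⁻¹ * s2⁻¹ * s1 := by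
      calc s2 * u = (u⁻¹ * s2⁻¹)⁻¹ := by group
        _ = (s1⁻¹ * s2 * s1)⁻¹ := by rw [A1]
        _ = s1⁻¹ * s2⁻¹ * s1 := by group
    have hXq : (s2 * u) ^ q = 1 := by
      rw [hXinv, conjpow s2⁻¹ q, inv_pow, hs2q]
      group
    obtain ⟨c, hE, hM⟩ := NF q
    have hc0 : c ≡ 0 [MOD q] := by
      apply cancel2
      calc 2 * c ≡ 2 * q + t * (q * (q + 1)) [MOD q] := hM
        _ ≡ 0 + 0 [MOD q] := by
            exact Nat.ModEq.add (Nat.modEq_zero_iff_dvd.mpr ⟨2, by ring⟩)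
              (Nat.modEq_zero_iff_dvd.mpr ⟨t * (q + 1), by ring⟩)
        _ = 2 * 0 := by ring
    have hsc : s2 ^ c = 1 := by
      have := spow hc0
      simpa using this
    have h13 : u ^ q * s2 ^ c = 1 := by rw [← hE]; exact hXq
    rwa [hsc, mul_one] at h13
  -- u ^ N = 1
  have hgcd : Nat.gcd t q = N := by
    have hqe : q = N * m := by
      rw [hqd, hNd, ← pow_succ]
      congr 1
      omega
    have hndvd : ¬ m ∣ k1 := by
      intro hd
      have := Nat.le_of_dvd (by omega) hd
      have := hm.two_le
      omega
    have hcop : Nat.gcd k1 m = 1 := ((hm.coprime_iff_not_dvd).mpr hndvd).symm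
    calc Nat.gcd t q = Nat.gcd (N * k1) (N * m) := by rw [hqe, htd, mul_comm k1 N]
      _ = N * Nat.gcd k1 m := Nat.gcd_mul_left N k1 m
      _ = N := by rw [hcop, mul_one]
    
  have huN : u ^ N = 1 := by
    have hto : orderOf u ∣ t := orderOf_dvd_of_pow_eq_one hut
    have hqo : orderOf u ∣ q := orderOf_dvd_of_pow_eq_one huq
    have := Nat.dvd_gcd hto hqo
    rw [hgcd] at this
    exact orderOf_dvd_iff_pow_eq_one.mp this
  -- final computation
  obtain ⟨c, hE, hM⟩ := NF N
  have hdiv : q ∣ t * (N * (N + 1)) := by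
    rw [show t * (N * (N + 1)) = (k1 * (N + 1)) * (N * N) by rw [htd]; ring]
    exact hNN.mul_left _
  have hcN : c ≡ N [MOD q] := by
    apply cancel2
    calc 2 * c ≡ 2 * N + t * (N * (N + 1)) [MOD q] := hM
      _ ≡ 2 * N + 0 [MOD q] := Nat.ModEq.add_left _ (Nat.modEq_zero_iff_dvd.mpr hdiv)
      _ = 2 * N := by ring
  calc s1⁻¹ * s2 ^ N * s1 = (s1⁻¹ * s2 * s1) ^ N := (conjpow s2 N).symm
    _ = (u⁻¹ * s2⁻¹) ^ N := by rw [A1]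
    _ = ((s2 * u)⁻¹) ^ N := by rw [mul_inv_rev]
    _ = ((s2 * u) ^ N)⁻¹ := by rw [inv_pow]
    _ = (u ^ N * s2 ^ c)⁻¹ := by rw [hE]
    _ = (s2 ^ N)⁻¹ := by rw [huN, one_mul, spow hcN]
end

section
/- Let Γ = ⟨σ₁, σ₂, σ₃⟩ with (σ₁σ₂)² = (σ₂σ₃)² = (σ₁σ₂σ₃)² = 1, σ₂ of order m^α (m an odd prime, α ≥ 2), satisfying σ₂σ₁² = σ₁²σ₂^{1+k₁m^{α−1}} and σ₃²σ₂ = σ₂^{1+k₂m^{α−1}}σ₃², and such that conjugation by σ₁ and by σ₃ each invert σ₂^{m^{α−1}}. Then σ₂^{1−2k₁m^{α−1}} = σ₂^{1−2k₂m^{α−1}}; hence k₁ ≡ k₂ (mod m). -/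
theorem stmt_15 {G : Type*} [Group G] (s1 s2 s3 : G) (m α k1 k2 : ℕ)
    (hm : Nat.Prime m) (hmodd : Odd m) (hα : 2 ≤ α)
    (hk1 : 1 ≤ k1) (hk1' : k1 ≤ m - 1) (hk2 : 1 ≤ k2) (hk2' : k2 ≤ m - 1)
    (hgen : Subgroup.closure {s1, s2, s3} = ⊤)
    (h12 : (s1 * s2) ^ 2 = 1) (h23 : (s2 * s3) ^ 2 = 1)
    (h123 : (s1 * s2 * s3) ^ 2 = 1)
    (hq : orderOf s2 = m ^ α)
    (r1 : s2 * s1 ^ 2 = s1 ^ 2 * s2 ^ (1 + k1 * m ^ (α - 1)))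
    (r2 : s3 ^ 2 * s2 = s2 ^ (1 + k2 * m ^ (α - 1)) * s3 ^ 2)
    (hinv1 : s1⁻¹ * s2 ^ (m ^ (α - 1)) * s1 = (s2 ^ (m ^ (α - 1)))⁻¹)
    (hinv3 : s3⁻¹ * s2 ^ (m ^ (α - 1)) * s3 = (s2 ^ (m ^ (α - 1)))⁻¹) :
    s2 ^ ((1 : ℤ) - 2 * k1 * m ^ (α - 1)) = s2 ^ ((1 : ℤ) - 2 * k2 * m ^ (α - 1)) ∧
    (k1 : ZMod m) = (k2 : ZMod m) := by
  set N := m ^ (α - 1) with hN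
  set z := s2 ^ N with hz
  rw [sq] at r1 r2
  -- basic dihedral-type consequences
  have h12' : s1 * s2 * (s1 * s2) = 1 := by rw [← sq]; exact h12
  have h23' : s2 * s3 * (s2 * s3) = 1 := by rw [← sq]; exact h23
  have h123' : s1 * s2 * s3 * (s1 * s2 * s3) = 1 := by rw [← sq]; exact h123
  have hs2s1s2 : s2 * s1 * s2 = s1⁻¹ := by
    calc s2 * s1 * s2 = s1⁻¹ * (s1 * s2 * (s1 * s2)) := by group
    _ = s1⁻¹ := by rw [h12']; group
  have hs2s3s2 : s2 * s3 * s2 = s3⁻¹ := by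
    calc s2 * s3 * s2 = (s2 * s3 * (s2 * s3)) * s3⁻¹ := by group
    _ = s3⁻¹ := by rw [h23']; group
  have E1 : (s2 * s3) * s1 * (s2 * s3) = s1⁻¹ := by
    calc (s2 * s3) * s1 * (s2 * s3)
        = s1⁻¹ * (s1 * s2 * s3 * (s1 * s2 * s3)) := by group
    _ = s1⁻¹ := by rw [h123']; group
  have E2 : (s1 * s2) * s3 * (s1 * s2) = s3⁻¹ := by
    calc (s1 * s2) * s3 * (s1 * s2)
        = s3⁻¹ * (s2⁻¹ * s1⁻¹ * (s1 * s2 * s3 * (s1 * s2 * s3)) * (s1 * s2)) := by group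
    _ = s3⁻¹ := by rw [h123']; group
  have E1sq : (s2 * s3) * (s1 * s1) * (s2 * s3) = s1⁻¹ * s1⁻¹ := by
    calc (s2 * s3) * (s1 * s1) * (s2 * s3)
        = (s2 * s3) * s1 * (s2 * s3 * (s2 * s3)) * s1 * (s2 * s3) := by rw [h23']; group
    _ = ((s2 * s3) * s1 * (s2 * s3)) * ((s2 * s3) * s1 * (s2 * s3)) := by group
    _ = s1⁻¹ * s1⁻¹ := by rw [E1]
  have E2sq : (s1 * s2) * (s3 * s3) * (s1 * s2) = s3⁻¹ * s3⁻¹ := by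
    calc (s1 * s2) * (s3 * s3) * (s1 * s2)
        = (s1 * s2) * s3 * (s1 * s2 * (s1 * s2)) * s3 * (s1 * s2) := by rw [h12']; group
    _ = ((s1 * s2) * s3 * (s1 * s2)) * ((s1 * s2) * s3 * (s1 * s2)) := by group
    _ = s3⁻¹ * s3⁻¹ := by rw [E2]
  -- conjugation of z and its powers
  have hz1 : s1 * z * s1⁻¹ = z⁻¹ := by
    calc s1 * z * s1⁻¹ = (s1 * (s1⁻¹ * z * s1) * s1⁻¹)⁻¹ := by rw [hinv1]; group
    _ = z⁻¹ := by group
  have hz3 : s3 * z * s3⁻¹ = z⁻¹ := by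
    calc s3 * z * s3⁻¹ = (s3 * (s3⁻¹ * z * s3) * s3⁻¹)⁻¹ := by rw [hinv3]; group
    _ = z⁻¹ := by group
  have conj1 : ∀ j : ℕ, s1 * z ^ j * s1⁻¹ = (z ^ j)⁻¹ := by
    intro j
    calc s1 * z ^ j * s1⁻¹ = (s1 * z * s1⁻¹) ^ j := by rw [conj_pow]
    _ = (z⁻¹) ^ j := by rw [hz1]
    _ = (z ^ j)⁻¹ := by rw [inv_pow]
  have conj1' : ∀ j : ℕ, s1⁻¹ * z ^ j * s1 = (z ^ j)⁻¹ := by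
    intro j
    calc s1⁻¹ * z ^ j * s1 = (s1⁻¹ * z * s1) ^ j := by
          rw [show s1⁻¹ * z * s1 = s1⁻¹ * z * (s1⁻¹)⁻¹ by group, conj_pow]; group
    _ = (z⁻¹) ^ j := by rw [hinv1]
    _ = (z ^ j)⁻¹ := by rw [inv_pow]
  have conj3 : ∀ j : ℕ, s3 * z ^ j * s3⁻¹ = (z ^ j)⁻¹ := by
    intro j
    calc s3 * z ^ j * s3⁻¹ = (s3 * z * s3⁻¹) ^ j := by rw [conj_pow]
    _ = (z⁻¹) ^ j := by rw [hz3]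
    _ = (z ^ j)⁻¹ := by rw [inv_pow]
  have conj3' : ∀ j : ℕ, s3⁻¹ * z ^ j * s3 = (z ^ j)⁻¹ := by
    intro j
    calc s3⁻¹ * z ^ j * s3 = (s3⁻¹ * z * s3) ^ j := by
          rw [show s3⁻¹ * z * s3 = s3⁻¹ * z * (s3⁻¹)⁻¹ by group, conj_pow]; group
    _ = (z⁻¹) ^ j := by rw [hinv3]
    _ = (z ^ j)⁻¹ := by rw [inv_pow]
  have conj1inv : ∀ j : ℕ, s1 * (z ^ j)⁻¹ * s1⁻¹ = z ^ j := by
    intro j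
    calc s1 * (z ^ j)⁻¹ * s1⁻¹ = (s1 * z ^ j * s1⁻¹)⁻¹ := by group
    _ = z ^ j := by rw [conj1]; group
  have conj3'inv : ∀ j : ℕ, s3⁻¹ * (z ^ j)⁻¹ * s3 = z ^ j := by
    intro j
    calc s3⁻¹ * (z ^ j)⁻¹ * s3 = (s3⁻¹ * z ^ j * s3)⁻¹ := by group
    _ = z ^ j := by rw [conj3']; group
  have comm1 : ∀ j : ℕ, (s1 * s1) * z ^ j * (s1 * s1)⁻¹ = z ^ j := by
    intro j
    calc (s1 * s1) * z ^ j * (s1 * s1)⁻¹ = s1 * (s1 * z ^ j * s1⁻¹) * s1⁻¹ := by group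
    _ = s1 * (z ^ j)⁻¹ * s1⁻¹ := by rw [conj1]
    _ = z ^ j := conj1inv j
  have comm3 : ∀ j : ℕ, (s3 * s3)⁻¹ * z ^ j * (s3 * s3) = z ^ j := by
    intro j
    calc (s3 * s3)⁻¹ * z ^ j * (s3 * s3) = s3⁻¹ * (s3⁻¹ * z ^ j * s3) * s3 := by group
    _ = s3⁻¹ * (z ^ j)⁻¹ * s3 := by rw [conj3']
    _ = z ^ j := conj3'inv j
  -- commuting of z with s2, rewritten relations
  have hc : Commute s2 z := by rw [hz]; exact (Commute.refl s2).pow_right N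
  have zp : ∀ j : ℕ, z ^ j * s2 = s2 * z ^ j := fun j => (hc.pow_right j).eq.symm
  have hsz1 : s2 ^ (1 + k1 * N) = s2 * z ^ k1 := by
    rw [pow_add, pow_one, mul_comm k1 N, pow_mul, ← hz]
  have hsz2 : s2 ^ (1 + k2 * N) = s2 * z ^ k2 := by
    rw [pow_add, pow_one, mul_comm k2 N, pow_mul, ← hz]
  rw [hsz1] at r1
  rw [hsz2] at r2
  -- hA : s2 (s3 s3) s2⁻¹ = (z^k2)⁻¹ (s3 s3)
  have hA : s2 * (s3 * s3) * s2⁻¹ = (z ^ k2)⁻¹ * (s3 * s3) := by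
    calc s2 * (s3 * s3) * s2⁻¹
        = (z ^ k2)⁻¹ * (z ^ k2 * s2 * (s3 * s3) * s2⁻¹) := by group
      _ = (z ^ k2)⁻¹ * (s2 * z ^ k2 * (s3 * s3) * s2⁻¹) := by rw [zp k2]
      _ = (z ^ k2)⁻¹ * (s3 * s3 * s2 * s2⁻¹) := by rw [← r2]
      _ = (z ^ k2)⁻¹ * (s3 * s3) := by group
  -- hB : (s1 s1) s2 = s2 (s1 s1) (z^k1)⁻¹
  have hB : s1 * s1 * s2 = s2 * (s1 * s1) * (z ^ k1)⁻¹ := by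
    calc s1 * s1 * s2 = s1 * s1 * (s2 * z ^ k1) * (z ^ k1)⁻¹ := by group
      _ = s2 * (s1 * s1) * (z ^ k1)⁻¹ := by rw [← r1]
  -- hI : s1 (s3 s3) s1⁻¹ = (z^k2)⁻¹ (s3⁻¹ s3⁻¹)
  have hI : s1 * (s3 * s3) * s1⁻¹ = (z ^ k2)⁻¹ * (s3⁻¹ * s3⁻¹) := by
    have step : s1 * ((z ^ k2)⁻¹ * (s3 * s3)) * s1⁻¹ = s3⁻¹ * s3⁻¹ := by
      calc s1 * ((z ^ k2)⁻¹ * (s3 * s3)) * s1⁻¹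
          = s1 * (s2 * (s3 * s3) * s2⁻¹) * s1⁻¹ := by rw [hA]
        _ = (s1 * s2) * (s3 * s3) * (s1 * s2) * (s1 * s2 * (s1 * s2))⁻¹ := by group
        _ = (s1 * s2) * (s3 * s3) * (s1 * s2) := by rw [h12']; group
        _ = s3⁻¹ * s3⁻¹ := E2sq
    calc s1 * (s3 * s3) * s1⁻¹
        = (s1 * (z ^ k2)⁻¹ * s1⁻¹)⁻¹ * (s1 * ((z ^ k2)⁻¹ * (s3 * s3)) * s1⁻¹) := by group
      _ = (z ^ k2)⁻¹ * (s3⁻¹ * s3⁻¹) := by rw [conj1inv k2, step]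
  -- hIII : s3⁻¹ (s1 s1) s3 = (s1⁻¹ s1⁻¹) (z^k1)⁻¹
  have hIII : s3⁻¹ * (s1 * s1) * s3 = s1⁻¹ * s1⁻¹ * (z ^ k1)⁻¹ := by
    have step1 : s2 * s3 * (s2 * (s1 * s1) * (z ^ k1)⁻¹) * s3 = s1⁻¹ * s1⁻¹ := by
      rw [← hB, ← E1sq]; group
    calc s3⁻¹ * (s1 * s1) * s3
        = (s3⁻¹ * (s1 * s1) * (z ^ k1)⁻¹ * s3) * (s3⁻¹ * (z ^ k1)⁻¹ * s3)⁻¹ := by group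
      _ = (s3⁻¹ * (s1 * s1) * (z ^ k1)⁻¹ * s3) * (z ^ k1)⁻¹ := by rw [conj3'inv k1]
      _ = (s2 * s3 * s2 * (s1 * s1) * (z ^ k1)⁻¹ * s3) * (z ^ k1)⁻¹ := by rw [hs2s3s2]
      _ = (s2 * s3 * (s2 * (s1 * s1) * (z ^ k1)⁻¹) * s3) * (z ^ k1)⁻¹ := by group
      _ = s1⁻¹ * s1⁻¹ * (z ^ k1)⁻¹ := by rw [step1]
  -- the two ways of computing the commutator
  have hWA : (s1 * s1) * (s3 * s3) * (s1 * s1)⁻¹ = z ^ k2 * (s3 * s3) * z ^ k2 := by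
    calc (s1 * s1) * (s3 * s3) * (s1 * s1)⁻¹
        = s1 * (s1 * (s3 * s3) * s1⁻¹) * s1⁻¹ := by group
      _ = s1 * ((z ^ k2)⁻¹ * (s3⁻¹ * s3⁻¹)) * s1⁻¹ := by rw [hI]
      _ = (s1 * (z ^ k2)⁻¹ * s1⁻¹) * (s1 * (s3 * s3) * s1⁻¹)⁻¹ := by group
      _ = z ^ k2 * ((z ^ k2)⁻¹ * (s3⁻¹ * s3⁻¹))⁻¹ := by rw [conj1inv k2, hI]
      _ = z ^ k2 * (s3 * s3) * z ^ k2 := by simp [mul_assoc]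
  have hWB : (s3 * s3)⁻¹ * (s1 * s1) * (s3 * s3) = z ^ k1 * (s1 * s1) * z ^ k1 := by
    calc (s3 * s3)⁻¹ * (s1 * s1) * (s3 * s3)
        = s3⁻¹ * (s3⁻¹ * (s1 * s1) * s3) * s3 := by group
      _ = s3⁻¹ * (s1⁻¹ * s1⁻¹ * (z ^ k1)⁻¹) * s3 := by rw [hIII]
      _ = (s3⁻¹ * (s1 * s1) * s3)⁻¹ * (s3⁻¹ * (z ^ k1)⁻¹ * s3) := by group
      _ = (s1⁻¹ * s1⁻¹ * (z ^ k1)⁻¹)⁻¹ * z ^ k1 := by rw [hIII, conj3'inv k1]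
      _ = z ^ k1 * (s1 * s1) * z ^ k1 := by simp [mul_assoc]
  have hDA : (s3 * s3)⁻¹ * ((s1 * s1) * (s3 * s3) * (s1 * s1)⁻¹) = z ^ k2 * z ^ k2 := by
    calc (s3 * s3)⁻¹ * ((s1 * s1) * (s3 * s3) * (s1 * s1)⁻¹)
        = (s3 * s3)⁻¹ * (z ^ k2 * (s3 * s3) * z ^ k2) := by rw [hWA]
      _ = ((s3 * s3)⁻¹ * z ^ k2 * (s3 * s3)) * z ^ k2 := by group
      _ = z ^ k2 * z ^ k2 := by rw [comm3 k2]
  have hDB : (s3 * s3)⁻¹ * ((s1 * s1) * (s3 * s3) * (s1 * s1)⁻¹) = z ^ k1 * z ^ k1 := by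
    calc (s3 * s3)⁻¹ * ((s1 * s1) * (s3 * s3) * (s1 * s1)⁻¹)
        = ((s3 * s3)⁻¹ * (s1 * s1) * (s3 * s3)) * (s1 * s1)⁻¹ := by group
      _ = z ^ k1 * (s1 * s1) * z ^ k1 * (s1 * s1)⁻¹ := by rw [hWB]
      _ = z ^ k1 * ((s1 * s1) * z ^ k1 * (s1 * s1)⁻¹) := by group
      _ = z ^ k1 * z ^ k1 := by rw [comm1 k1]
  have hkey : z ^ (2 * k1) = z ^ (2 * k2) := by
    calc z ^ (2 * k1) = z ^ k1 * z ^ k1 := by rw [two_mul, pow_add]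
      _ = z ^ k2 * z ^ k2 := hDB.symm.trans hDA
      _ = z ^ (2 * k2) := by rw [two_mul, pow_add]
  -- order of z is m
  have hNm : N * m = m ^ α := by
    rw [hN, ← pow_succ, Nat.sub_add_cancel (le_trans one_le_two hα)]
  have hNz : z ^ m = 1 := by
    rw [hz, ← pow_mul, hNm, ← hq, pow_orderOf_eq_one]
  have hzne : z ≠ 1 := by
    intro h
    have hdvd : orderOf s2 ∣ N := orderOf_dvd_of_pow_eq_one (by rw [← hz]; exact h)
    rw [hq, hN] at hdvd
    have hlt : m ^ (α - 1) < m ^ α := Nat.pow_lt_pow_right hm.one_lt (by omega)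
    have hle := Nat.le_of_dvd (Nat.pow_pos hm.pos) hdvd
    omega
  have hordz : orderOf z = m := by
    have hdvd : orderOf z ∣ m := orderOf_dvd_of_pow_eq_one hNz
    rcases hm.eq_one_or_self_of_dvd _ hdvd with h | h
    · exact absurd (orderOf_eq_one_iff.mp h) hzne
    · exact h
  have hmodeq : 2 * k1 ≡ 2 * k2 [MOD m] := by
    have h := pow_eq_pow_iff_modEq.mp hkey
    rwa [hordz] at h
  -- first conclusion
  have hnat : s2 ^ (2 * k1 * N) = s2 ^ (2 * k2 * N) := by
    calc s2 ^ (2 * k1 * N) = z ^ (2 * k1) := by rw [hz, ← pow_mul, mul_comm N (2 * k1)]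
      _ = z ^ (2 * k2) := hkey
      _ = s2 ^ (2 * k2 * N) := by rw [hz, ← pow_mul, mul_comm N (2 * k2)]
  have e : ∀ k : ℕ, (1 : ℤ) - 2 * (k : ℤ) * (m : ℤ) ^ (α - 1) = 1 - ((2 * k * N : ℕ) : ℤ) := by
    intro k; rw [hN]; push_cast; ring
  constructor
  · rw [e k1, e k2, zpow_sub, zpow_sub, zpow_natCast, zpow_natCast, hnat]
  -- second conclusion
  · haveI : Fact (Nat.Prime m) := ⟨hm⟩
    haveI : NeZero m := ⟨hm.pos.ne'⟩
    have hcast : ((2 * k1 : ℕ) : ZMod m) = ((2 * k2 : ℕ) : ZMod m) :=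
      (ZMod.natCast_eq_natCast_iff _ _ _).mpr hmodeq
    have h2 : (2 : ZMod m) ≠ 0 := by
      intro h
      have hdvd : m ∣ 2 := (ZMod.natCast_eq_zero_iff 2 m).mp (by exact_mod_cast h)
      have hm2 : m = 2 := (Nat.prime_dvd_prime_iff_eq hm Nat.prime_two).mp hdvd
      rw [hm2] at hmodd
      exact (by decide : ¬ Odd 2) hmodd
    have hfin : (2 : ZMod m) * (k1 : ZMod m) = 2 * (k2 : ZMod m) := by
      push_cast at hcast; exact_mod_cast hcast
    exact mul_left_cancel₀ h2 hfin
end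

section
/- Let Γ = ⟨σ₁, σ₂, σ₃⟩ with (σ₁σ₂)² = (σ₂σ₃)² = (σ₁σ₂σ₃)² = 1, σ₂ of order 2^β and σ₃ of order 8 (β ≥ 5), and suppose σ₂^{2^{β−1}} is central, σ₂σ₁⁻¹ = σ₁σ₂^{3−ε₁2^{β−1}} (ε₁ ∈ {0,1}), and σ₃σ₂⁻¹ = σ₂^{1+ε₂2^{β−2}}σ₃³, σ₃⁻¹σ₂ = σ₂^{−1+ε₂2^{β−2}}σ₃⁻³ (ε₂ = ±1). Then σ₂^{2^{β−1}} = 1, i.e. the order of σ₂ is strictly less than 2^β. (Hence the group Λ₆ does not have the required order and is not the automorphism group of a tight chiral 4-polytope.) -/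
private lemma conj_zpow' {G : Type*} [Group G] (g x : G) (n : ℤ) :
    (g * x * g⁻¹) ^ n = g * x ^ n * g⁻¹ := by
  simpa [MulAut.conj_apply] using (map_zpow (MulAut.conj g) x n).symm

set_option maxHeartbeats 2000000 in
theorem stmt_17 {G : Type*} [Group G] (s1 s2 s3 : G) (β : ℕ) (hβ : 5 ≤ β)
    (ε1 ε2 : ℤ) (hε1 : ε1 = 0 ∨ ε1 = 1) (hε2 : ε2 = 1 ∨ ε2 = -1)
    (hgen : Subgroup.closure {s1, s2, s3} = ⊤)
    (h12 : (s1 * s2) ^ 2 = 1) (h23 : (s2 * s3) ^ 2 = 1)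
    (h123 : (s1 * s2 * s3) ^ 2 = 1)
    (hq : orderOf s2 = 2 ^ β) (hr : orderOf s3 = 8)
    (hcentral : ∀ g : G, g * s2 ^ ((2 : ℤ) ^ (β - 1)) = s2 ^ ((2 : ℤ) ^ (β - 1)) * g)
    (r1 : s2 * s1⁻¹ = s1 * s2 ^ ((3 : ℤ) - ε1 * 2 ^ (β - 1)))
    (r2 : s3 * s2⁻¹ = s2 ^ ((1 : ℤ) + ε2 * 2 ^ (β - 2)) * s3 ^ 3)
    (r3 : s3⁻¹ * s2 = s2 ^ ((-1 : ℤ) + ε2 * 2 ^ (β - 2)) * s3 ^ (-3 : ℤ)) :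
    s2 ^ ((2 : ℤ) ^ (β - 1)) = 1 := by
  clear hcentral r3 hgen
  obtain ⟨m, rfl⟩ : ∃ m, β = m + 4 := ⟨β - 4, by omega⟩
  set v : ℤ := 2 ^ m with hv
  have hb1 : m + 4 - 1 = m + 3 := rfl
  have hb2 : m + 4 - 2 = m + 2 := rfl
  have hp1 : (2 : ℤ) ^ (m + 3) = 8 * v := by rw [hv]; ring
  have hp2 : (2 : ℤ) ^ (m + 2) = 4 * v := by rw [hv]; ring
  rw [hb1, hp1] at r1 ⊢
  rw [hb2, hp2] at r2
  set K : ℤ := 4 * ε2 * v with hK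
  set E : ℤ := 8 * ε1 * v with hE
  have r1' : s2 * s1⁻¹ = s1 * s2 ^ ((3 : ℤ) - E) := by
    rw [r1]; congr 1; rw [hE]; ring_nf
  have r2' : s3 * s2⁻¹ = s2 ^ ((1 : ℤ) + K) * s3 ^ 3 := by
    rw [r2]; congr 2; rw [hK]; ring
  clear r1 r2
  -- order facts
  have h16 : s2 ^ ((16 * v : ℤ)) = 1 := by
    have h := pow_orderOf_eq_one s2
    rw [hq] at h
    have h2 : s2 ^ (((2 ^ (m + 4) : ℕ) : ℤ)) = 1 := by rw [zpow_natCast]; exact h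
    rwa [show ((2 ^ (m + 4) : ℕ) : ℤ) = 16 * v by push_cast [hv]; ring] at h2
  have key : ∀ a : ℤ, s2 ^ (16 * v * a) = 1 := by
    intro a; rw [zpow_mul, h16, one_zpow]
  have pw : ∀ a b c : ℤ, a = b + 16 * v * c → s2 ^ a = s2 ^ b := by
    intro a b c h; rw [h, zpow_add, key, mul_one]
  have h8z : s3 ^ (8 : ℤ) = 1 := by
    have h := pow_orderOf_eq_one s3
    rw [hr] at h
    rw [show (8 : ℤ) = ((8 : ℕ) : ℤ) by norm_num, zpow_natCast]
    exact h
  have hT44 : s3 ^ (-4 : ℤ) = s3 ^ (4 : ℤ) := by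
    rw [show (-4 : ℤ) = 4 + 8 * (-1) by ring, zpow_add, zpow_mul, h8z, one_zpow, mul_one]
  -- basic relations
  have L1 : s3 * s2 * s3 = s2⁻¹ := by
    have h' : s2 * s3 * (s2 * s3) = 1 := by rw [← sq]; exact h23
    calc s3 * s2 * s3 = s2⁻¹ * (s2 * s3 * (s2 * s3)) := by group
    _ = s2⁻¹ := by rw [h']; group
  have L2 : s1 * s2 * s1 = s2⁻¹ := by
    have h' : s1 * s2 * (s1 * s2) = 1 := by rw [← sq]; exact h12
    calc s1 * s2 * s1 = s1 * s2 * (s1 * s2) * s2⁻¹ := by group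
    _ = s2⁻¹ := by rw [h']; group
  have L2' : s2 * s1 * s2 = s1⁻¹ := by
    have h' : s1 * s2 * (s1 * s2) = 1 := by rw [← sq]; exact h12
    calc s2 * s1 * s2 = s1⁻¹ * (s1 * s2 * (s1 * s2)) := by group
    _ = s1⁻¹ := by rw [h']; group
  have C3 : s1⁻¹ * s2 * s1⁻¹ = s2 ^ ((3 : ℤ) - E) := by
    calc s1⁻¹ * s2 * s1⁻¹ = s1⁻¹ * (s2 * s1⁻¹) := by group
    _ = s1⁻¹ * (s1 * s2 ^ ((3:ℤ) - E)) := by rw [r1']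
    _ = s2 ^ ((3:ℤ) - E) := by group
  have c1 : s3 * s2 * s3⁻¹ = s2⁻¹ * s3 ^ (-2 : ℤ) := by
    calc s3 * s2 * s3⁻¹ = (s3 * s2 * s3) * s3 ^ (-2 : ℤ) := by group
    _ = s2⁻¹ * s3 ^ (-2 : ℤ) := by rw [L1]
  have C4 : s3 * s1 * s3⁻¹ = s1 * s2 ^ (2 : ℤ) := by
    have h' : s1 * s2 * s3 * (s1 * s2 * s3) = 1 := by rw [← sq]; exact h123
    have e1 : s3 * s1 * s2 * s3 = s2⁻¹ * s1⁻¹ := by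
      calc s3 * s1 * s2 * s3 = (s2⁻¹ * s1⁻¹) * (s1 * s2 * s3 * (s1 * s2 * s3)) := by
            group
      _ = s2⁻¹ * s1⁻¹ := by rw [h']; group
    have L1inv : s3⁻¹ * s2⁻¹ * s3⁻¹ = s2 := by
      have := congrArg (fun x => x⁻¹) L1
      simpa [mul_assoc] using this
    calc s3 * s1 * s3⁻¹ = (s3 * s1 * s2 * s3) * (s3⁻¹ * s2⁻¹ * s3⁻¹) := by group
    _ = (s2⁻¹ * s1⁻¹) * s2 := by rw [e1, L1inv]
    _ = s2⁻¹ * (s2 * s1 * s2) * s2 := by rw [L2']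
    _ = s1 * s2 ^ (2 : ℤ) := by rw [zpow_two]; group
  -- conjugation of s2 by s3^2
  have e2 : s3 * s2⁻¹ * s3⁻¹ = s2 ^ ((1:ℤ) + K) * s3 ^ (2:ℤ) := by
    calc s3 * s2⁻¹ * s3⁻¹ = (s3 * s2⁻¹) * s3⁻¹ := by group
    _ = (s2 ^ ((1:ℤ) + K) * s3 ^ 3) * s3⁻¹ := by rw [r2']
    _ = s2 ^ ((1:ℤ) + K) * s3 ^ (2:ℤ) := by group
  have e3 : s3 * s2⁻¹ * s3⁻¹ = s3 ^ (2:ℤ) * s2 := by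
    calc s3 * s2⁻¹ * s3⁻¹ = (s3 * s2 * s3⁻¹)⁻¹ := by group
    _ = (s2⁻¹ * s3 ^ (-2:ℤ))⁻¹ := by rw [c1]
    _ = s3 ^ (2:ℤ) * s2 := by group
  have pb : s3 ^ (2:ℤ) * s2 * (s3 ^ (2:ℤ))⁻¹ = s2 ^ ((1:ℤ) + K) := by
    have h := e3.symm.trans e2
    calc s3 ^ (2:ℤ) * s2 * (s3 ^ (2:ℤ))⁻¹ = (s3 ^ (2:ℤ) * s2) * s3 ^ (-2:ℤ) := by group
    _ = (s2 ^ ((1:ℤ) + K) * s3 ^ (2:ℤ)) * s3 ^ (-2:ℤ) := by rw [h]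
    _ = s2 ^ ((1:ℤ) + K) := by group
  have P5 : ∀ a : ℤ, s3 ^ (2:ℤ) * s2 ^ a * s3 ^ (-2:ℤ) = s2 ^ (a * (1 + K)) := by
    intro a
    calc s3 ^ (2:ℤ) * s2 ^ a * s3 ^ (-2:ℤ)
        = s3 ^ (2:ℤ) * s2 ^ a * (s3 ^ (2:ℤ))⁻¹ := by group
    _ = (s3 ^ (2:ℤ) * s2 * (s3 ^ (2:ℤ))⁻¹) ^ a := (conj_zpow' _ _ _).symm
    _ = (s2 ^ ((1:ℤ) + K)) ^ a := by rw [pb]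
    _ = s2 ^ (a * (1 + K)) := by rw [← zpow_mul]; congr 1; ring
  have P5' : ∀ a : ℤ, s3 ^ (-2:ℤ) * s2 ^ a * s3 ^ (2:ℤ) = s2 ^ (a * (1 - K)) := by
    intro a
    have h := P5 (a * (1 - K))
    have h2 : s2 ^ (a * (1 - K) * (1 + K)) = s2 ^ a :=
      pw _ _ (-(a * ε2 * ε2 * v)) (by rw [hK]; ring)
    rw [h2] at h
    calc s3 ^ (-2:ℤ) * s2 ^ a * s3 ^ (2:ℤ)
        = s3 ^ (-2:ℤ) * (s3 ^ (2:ℤ) * s2 ^ (a * (1 - K)) * s3 ^ (-2:ℤ)) * s3 ^ (2:ℤ) := by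
          rw [h]
    _ = s2 ^ (a * (1 - K)) := by group
  have PT : ∀ a : ℤ, s3 ^ (4:ℤ) * s2 ^ a * s3 ^ (-4:ℤ) = s2 ^ (a * (1 + 2*K)) := by
    intro a
    have h : s3 ^ (4:ℤ) * s2 ^ a * s3 ^ (-4:ℤ)
        = s3 ^ (2:ℤ) * (s3 ^ (2:ℤ) * s2 ^ a * s3 ^ (-2:ℤ)) * s3 ^ (-2:ℤ) := by group
    rw [h, P5 a, P5 (a * (1 + K))]
    exact pw _ _ (a * ε2 * ε2 * v) (by rw [hK]; ring)
  have Tc2 : ∀ a : ℤ, s3 ^ (4:ℤ) * s2 ^ (2*a) = s2 ^ (2*a) * s3 ^ (4:ℤ) := by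
    intro a
    have h := PT (2*a)
    have h2 : s2 ^ (2*a * (1 + 2*K)) = s2 ^ (2*a) := pw _ _ (a * ε2) (by rw [hK]; ring)
    rw [h2] at h
    calc s3 ^ (4:ℤ) * s2 ^ (2*a)
        = (s3 ^ (4:ℤ) * s2 ^ (2*a) * s3 ^ (-4:ℤ)) * s3 ^ (4:ℤ) := by group
    _ = s2 ^ (2*a) * s3 ^ (4:ℤ) := by rw [h]
  have c2 : s3 * s2 ^ (2:ℤ) * s3⁻¹ = s2 ^ (K - 2) * s3 ^ (4:ℤ) := by
    calc s3 * s2 ^ (2:ℤ) * s3⁻¹ = (s3 * s2 * s3⁻¹) * (s3 * s2 * s3⁻¹) := by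
          rw [zpow_two]; group
    _ = (s2⁻¹ * s3 ^ (-2:ℤ)) * (s2⁻¹ * s3 ^ (-2:ℤ)) := by rw [c1]
    _ = s2 ^ (-1:ℤ) * (s3 ^ (-2:ℤ) * s2 ^ (-1:ℤ) * s3 ^ (2:ℤ)) * s3 ^ (-4:ℤ) := by group
    _ = s2 ^ (-1:ℤ) * s2 ^ ((-1) * (1 - K)) * s3 ^ (-4:ℤ) := by rw [P5' (-1)]
    _ = s2 ^ (K - 2) * s3 ^ (-4:ℤ) := by
          rw [← zpow_add, show (-1:ℤ) + (-1) * (1 - K) = K - 2 by ring]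
    _ = s2 ^ (K - 2) * s3 ^ (4:ℤ) := by rw [hT44]
  have c2m : ∀ a : ℤ, s3 * s2 ^ (2*a) * s3⁻¹ = s2 ^ ((K-2)*a) * s3 ^ (4*a) := by
    intro a
    have hc : Commute (s2 ^ (K-2)) (s3 ^ (4:ℤ)) := by
      have h := Tc2 (2*ε2*v - 1)
      rw [show (2:ℤ) * (2*ε2*v - 1) = K - 2 by rw [hK]; ring] at h
      exact h.symm
    calc s3 * s2 ^ (2*a) * s3⁻¹ = s3 * (s2 ^ (2:ℤ)) ^ a * s3⁻¹ := by rw [← zpow_mul]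
    _ = (s3 * s2 ^ (2:ℤ) * s3⁻¹) ^ a := (conj_zpow' _ _ _).symm
    _ = (s2 ^ (K-2) * s3 ^ (4:ℤ)) ^ a := by rw [c2]
    _ = (s2 ^ (K-2)) ^ a * (s3 ^ (4:ℤ)) ^ a := hc.mul_zpow a
    _ = s2 ^ ((K-2)*a) * s3 ^ (4*a) := by rw [← zpow_mul, ← zpow_mul]
  have C_H : s3 ^ (2:ℤ) * s1 * s3 ^ (-2:ℤ) = s1 * s2 ^ K * s3 ^ (4:ℤ) := by
    calc s3 ^ (2:ℤ) * s1 * s3 ^ (-2:ℤ) = s3 * (s3 * s1 * s3⁻¹) * s3⁻¹ := by rw [zpow_two]; group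
    _ = s3 * (s1 * s2 ^ (2:ℤ)) * s3⁻¹ := by rw [C4]
    _ = (s3 * s1 * s3⁻¹) * (s3 * s2 ^ (2:ℤ) * s3⁻¹) := by group
    _ = (s1 * s2 ^ (2:ℤ)) * (s2 ^ (K-2) * s3 ^ (4:ℤ)) := by rw [C4, c2]
    _ = s1 * (s2 ^ (2:ℤ) * s2 ^ (K-2)) * s3 ^ (4:ℤ) := by group
    _ = s1 * s2 ^ K * s3 ^ (4:ℤ) := by
          rw [← zpow_add, show (2:ℤ) + (K - 2) = K by ring]
  have CT : s3 ^ (4:ℤ) * s1 * s3 ^ (-4:ℤ) = s1 * s2 ^ (2*K) := by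
    have hmove : s3 ^ (4:ℤ) * s2 ^ (K*(1+K)) = s2 ^ (K*(1+K)) * s3 ^ (4:ℤ) := by
      have h := Tc2 (2*ε2*v*(1+K))
      rwa [show (2:ℤ)*(2*ε2*v*(1+K)) = K*(1+K) by rw [hK]; ring] at h
    calc s3 ^ (4:ℤ) * s1 * s3 ^ (-4:ℤ)
        = s3 ^ (2:ℤ) * (s3 ^ (2:ℤ) * s1 * s3 ^ (-2:ℤ)) * s3 ^ (-2:ℤ) := by group
    _ = s3 ^ (2:ℤ) * (s1 * s2 ^ K * s3 ^ (4:ℤ)) * s3 ^ (-2:ℤ) := by rw [C_H]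
    _ = (s3 ^ (2:ℤ) * s1 * s3 ^ (-2:ℤ)) * (s3 ^ (2:ℤ) * s2 ^ K * s3 ^ (-2:ℤ)) * s3 ^ (4:ℤ) := by
          group
    _ = (s1 * s2 ^ K * s3 ^ (4:ℤ)) * s2 ^ (K*(1+K)) * s3 ^ (4:ℤ) := by rw [C_H, P5]
    _ = s1 * s2 ^ K * (s3 ^ (4:ℤ) * s2 ^ (K*(1+K))) * s3 ^ (4:ℤ) := by group
    _ = s1 * s2 ^ K * (s2 ^ (K*(1+K)) * s3 ^ (4:ℤ)) * s3 ^ (4:ℤ) := by rw [hmove]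
    _ = s1 * (s2 ^ K * s2 ^ (K*(1+K))) * s3 ^ (8:ℤ) := by group
    _ = s1 * (s2 ^ K * s2 ^ (K*(1+K))) := by rw [h8z, mul_one]
    _ = s1 * s2 ^ (K + K*(1+K)) := by rw [← zpow_add]
    _ = s1 * s2 ^ (2*K) := by
          rw [pw (K + K*(1+K)) (2*K) (ε2*ε2*v) (by rw [hK]; ring)]
  have CT' : s3 ^ (4:ℤ) * s1⁻¹ = s2 ^ (-(2*K)) * s1⁻¹ * s3 ^ (4:ℤ) := by
    calc s3 ^ (4:ℤ) * s1⁻¹ = (s3 ^ (4:ℤ) * s1 * s3 ^ (-4:ℤ))⁻¹ * s3 ^ (4:ℤ) := by group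
    _ = (s1 * s2 ^ (2*K))⁻¹ * s3 ^ (4:ℤ) := by rw [CT]
    _ = s2 ^ (-(2*K)) * s1⁻¹ * s3 ^ (4:ℤ) := by group
  have Xl : s3 ^ (-2:ℤ) * s1 * s3 ^ (2:ℤ) = s1 * s2 ^ (-K) * s3 ^ (4:ℤ) := by
    have h : s1 = (s3 ^ (-2:ℤ) * s1 * s3 ^ (2:ℤ)) * s2 ^ (K * (1 - K)) *
        (s3 ^ (-2:ℤ) * s3 ^ (4:ℤ) * s3 ^ (2:ℤ)) := by
      calc s1 = s3 ^ (-2:ℤ) * (s3 ^ (2:ℤ) * s1 * s3 ^ (-2:ℤ)) * s3 ^ (2:ℤ) := by group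
      _ = s3 ^ (-2:ℤ) * (s1 * s2 ^ K * s3 ^ (4:ℤ)) * s3 ^ (2:ℤ) := by rw [C_H]
      _ = (s3 ^ (-2:ℤ) * s1 * s3 ^ (2:ℤ)) * (s3 ^ (-2:ℤ) * s2 ^ K * s3 ^ (2:ℤ)) *
            (s3 ^ (-2:ℤ) * s3 ^ (4:ℤ) * s3 ^ (2:ℤ)) := by group
      _ = _ := by rw [P5' K]
    have h2 : s3 ^ (-2:ℤ) * s1 * s3 ^ (2:ℤ)
        = s1 * (s3 ^ (-2:ℤ) * s3 ^ (4:ℤ) * s3 ^ (2:ℤ))⁻¹ * (s2 ^ (K * (1 - K)))⁻¹ := by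
      calc s3 ^ (-2:ℤ) * s1 * s3 ^ (2:ℤ)
          = (s3 ^ (-2:ℤ) * s1 * s3 ^ (2:ℤ)) * s2 ^ (K * (1 - K)) *
            (s3 ^ (-2:ℤ) * s3 ^ (4:ℤ) * s3 ^ (2:ℤ)) *
            (s3 ^ (-2:ℤ) * s3 ^ (4:ℤ) * s3 ^ (2:ℤ))⁻¹ * (s2 ^ (K * (1 - K)))⁻¹ := by group
      _ = _ := by rw [← h]
    have h3 : s1 * (s3 ^ (-2:ℤ) * s3 ^ (4:ℤ) * s3 ^ (2:ℤ))⁻¹ * (s2 ^ (K * (1 - K)))⁻¹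
        = s1 * s3 ^ (-4:ℤ) * s2 ^ (-(K * (1 - K))) := by group
    rw [h2, h3, hT44]
    have h4 : s3 ^ (4:ℤ) * s2 ^ (-(K * (1 - K))) = s2 ^ (-(K * (1 - K))) * s3 ^ (4:ℤ) := by
      have h := Tc2 (2*ε2*v*(K - 1))
      rwa [show (2:ℤ)*(2*ε2*v*(K-1)) = -(K * (1 - K)) by rw [hK]; ring] at h
    calc s1 * s3 ^ (4:ℤ) * s2 ^ (-(K * (1 - K)))
        = s1 * (s3 ^ (4:ℤ) * s2 ^ (-(K * (1 - K)))) := by group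
    _ = s1 * (s2 ^ (-(K * (1 - K))) * s3 ^ (4:ℤ)) := by rw [h4]
    _ = s1 * s2 ^ (-(K * (1 - K))) * s3 ^ (4:ℤ) := by group
    _ = s1 * s2 ^ (-K) * s3 ^ (4:ℤ) := by
          rw [pw (-(K * (1 - K))) (-K) (ε2*ε2*v) (by rw [hK]; ring)]
  have C_Hinv : s3 ^ (-2:ℤ) * s1⁻¹ * s3 ^ (2:ℤ) = s2 ^ K * s3 ^ (4:ℤ) * s1⁻¹ := by
    have hc : s3 ^ (4:ℤ) * s2 ^ K = s2 ^ K * s3 ^ (4:ℤ) := by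
      have h := Tc2 (2*ε2*v)
      rwa [show (2:ℤ)*(2*ε2*v) = K by rw [hK]; ring] at h
    calc s3 ^ (-2:ℤ) * s1⁻¹ * s3 ^ (2:ℤ) = (s3 ^ (-2:ℤ) * s1 * s3 ^ (2:ℤ))⁻¹ := by group
    _ = (s1 * s2 ^ (-K) * s3 ^ (4:ℤ))⁻¹ := by rw [Xl]
    _ = s3 ^ (-4:ℤ) * s2 ^ K * s1⁻¹ := by group
    _ = s3 ^ (4:ℤ) * s2 ^ K * s1⁻¹ := by rw [hT44]
    _ = s2 ^ K * s3 ^ (4:ℤ) * s1⁻¹ := by rw [hc]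
  have C6base : s1⁻¹ * s2 ^ (2:ℤ) * s1 = s2 ^ ((2:ℤ) - E) := by
    calc s1⁻¹ * s2 ^ (2:ℤ) * s1 = (s1⁻¹ * s2 * s1⁻¹) * (s1 * s2 * s1) := by
          rw [zpow_two]; group
    _ = s2 ^ ((3:ℤ) - E) * s2⁻¹ := by rw [C3, L2]
    _ = s2 ^ ((3:ℤ) - E) * s2 ^ (-1:ℤ) := by group
    _ = s2 ^ ((2:ℤ) - E) := by
          rw [← zpow_add, show (3:ℤ) - E + (-1) = 2 - E by ring]
  have C6 : ∀ a : ℤ, s1⁻¹ * s2 ^ (2*a) * s1 = s2 ^ ((2 - E)*a) := by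
    intro a
    calc s1⁻¹ * s2 ^ (2*a) * s1 = s1⁻¹ * (s2 ^ (2:ℤ)) ^ a * (s1⁻¹)⁻¹ := by
          rw [← zpow_mul, inv_inv]
    _ = (s1⁻¹ * s2 ^ (2:ℤ) * (s1⁻¹)⁻¹) ^ a := (conj_zpow' _ _ _).symm
    _ = (s2 ^ ((2:ℤ) - E)) ^ a := by rw [inv_inv, C6base]
    _ = s2 ^ ((2 - E)*a) := by rw [← zpow_mul]
  have C4' : s3 * s1⁻¹ * s3⁻¹ = s2 ^ (-2:ℤ) * s1⁻¹ := by
    calc s3 * s1⁻¹ * s3⁻¹ = (s3 * s1 * s3⁻¹)⁻¹ := by group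
    _ = (s1 * s2 ^ (2:ℤ))⁻¹ := by rw [C4]
    _ = s2 ^ (-2:ℤ) * s1⁻¹ := by group
  have m3 : s3 ^ (-2:ℤ) * s1⁻¹ = s2 ^ K * s3 ^ (4:ℤ) * s1⁻¹ * s3 ^ (-2:ℤ) := by
    calc s3 ^ (-2:ℤ) * s1⁻¹ = (s3 ^ (-2:ℤ) * s1⁻¹ * s3 ^ (2:ℤ)) * s3 ^ (-2:ℤ) := by group
    _ = (s2 ^ K * s3 ^ (4:ℤ) * s1⁻¹) * s3 ^ (-2:ℤ) := by rw [C_Hinv]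
    _ = _ := by group
  -- main computation: conjugate C3 by s3
  have lhs : s3 * (s1⁻¹ * s2 * s1⁻¹) * s3⁻¹
      = s2 ^ ((-2:ℤ) + ((2 - E)*(2*ε2*v - 2) + (3 - E))) * s3 ^ (2:ℤ) := by
    calc s3 * (s1⁻¹ * s2 * s1⁻¹) * s3⁻¹
        = (s3 * s1⁻¹ * s3⁻¹) * (s3 * s2 * s3⁻¹) * (s3 * s1⁻¹ * s3⁻¹) := by group
    _ = (s2 ^ (-2:ℤ) * s1⁻¹) * (s2⁻¹ * s3 ^ (-2:ℤ)) * (s2 ^ (-2:ℤ) * s1⁻¹) := by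
          rw [C4', c1]
    _ = s2 ^ (-2:ℤ) * s1⁻¹ * s2 ^ (-1:ℤ) * (s3 ^ (-2:ℤ) * s2 ^ (-2:ℤ) * s3 ^ (2:ℤ)) *
          (s3 ^ (-2:ℤ) * s1⁻¹) := by group
    _ = s2 ^ (-2:ℤ) * s1⁻¹ * s2 ^ (-1:ℤ) * s2 ^ ((-2) * (1 - K)) *
          (s3 ^ (-2:ℤ) * s1⁻¹) := by rw [P5' (-2)]
    _ = s2 ^ (-2:ℤ) * s1⁻¹ * s2 ^ (-1:ℤ) * s2 ^ ((-2) * (1 - K)) *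
          (s2 ^ K * s3 ^ (4:ℤ) * s1⁻¹ * s3 ^ (-2:ℤ)) := by rw [m3]
    _ = s2 ^ (-2:ℤ) * s1⁻¹ * s2 ^ (-1:ℤ) * s2 ^ ((-2) * (1 - K)) * s2 ^ K *
          (s3 ^ (4:ℤ) * s1⁻¹) * s3 ^ (-2:ℤ) := by group
    _ = s2 ^ (-2:ℤ) * s1⁻¹ * s2 ^ (-1:ℤ) * s2 ^ ((-2) * (1 - K)) * s2 ^ K *
          (s2 ^ (-(2*K)) * s1⁻¹ * s3 ^ (4:ℤ)) * s3 ^ (-2:ℤ) := by rw [CT']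
    _ = s2 ^ (-2:ℤ) * (s1⁻¹ * s2 ^ ((-1:ℤ) + (-2) * (1 - K) + K + -(2*K)) * s1⁻¹) *
          s3 ^ (2:ℤ) := by group
    _ = s2 ^ (-2:ℤ) * (s1⁻¹ * (s2 ^ (2*(2*ε2*v - 2)) * s2) * s1⁻¹) * s3 ^ (2:ℤ) := by
          rw [show (-1:ℤ) + (-2) * (1 - K) + K + -(2*K) = 2*(2*ε2*v - 2) + 1 by
                rw [hK]; ring,
             zpow_add, zpow_one]
    _ = s2 ^ (-2:ℤ) * ((s1⁻¹ * s2 ^ (2*(2*ε2*v - 2)) * s1) * (s1⁻¹ * s2 * s1⁻¹)) *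
          s3 ^ (2:ℤ) := by group
    _ = s2 ^ (-2:ℤ) * (s2 ^ ((2 - E)*(2*ε2*v - 2)) * s2 ^ ((3:ℤ) - E)) * s3 ^ (2:ℤ) := by
          rw [C6, C3]
    _ = s2 ^ ((-2:ℤ) + ((2 - E)*(2*ε2*v - 2) + (3 - E))) * s3 ^ (2:ℤ) := by
          rw [← zpow_add, ← zpow_add]
  have hs34 : s3 ^ (4*(1 - 4*ε1*v)) = s3 ^ (4:ℤ) := by
    rw [show (4*(1 - 4*ε1*v) : ℤ) = 4 + 8*(-2*ε1*v) by ring, zpow_add, zpow_mul, h8z,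
       one_zpow, mul_one]
  have rhs : s3 * s2 ^ ((3:ℤ) - E) * s3⁻¹
      = s2 ^ ((K-2)*(1 - 4*ε1*v) + (-1) * (1 + 2*K)) * s3 ^ (2:ℤ) := by
    have hsplit : s2 ^ ((3:ℤ) - E) = s2 ^ (2*(1 - 4*ε1*v)) * s2 := by
      rw [show (3:ℤ) - E = 2*(1 - 4*ε1*v) + 1 by rw [hE]; ring, zpow_add, zpow_one]
    calc s3 * s2 ^ ((3:ℤ) - E) * s3⁻¹
        = s3 * (s2 ^ (2*(1 - 4*ε1*v)) * s2) * s3⁻¹ := by rw [hsplit]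
    _ = (s3 * s2 ^ (2*(1 - 4*ε1*v)) * s3⁻¹) * (s3 * s2 * s3⁻¹) := by group
    _ = (s2 ^ ((K-2)*(1 - 4*ε1*v)) * s3 ^ (4*(1 - 4*ε1*v))) * (s2⁻¹ * s3 ^ (-2:ℤ)) := by
          rw [c2m, c1]
    _ = (s2 ^ ((K-2)*(1 - 4*ε1*v)) * s3 ^ (4:ℤ)) * (s2⁻¹ * s3 ^ (-2:ℤ)) := by rw [hs34]
    _ = s2 ^ ((K-2)*(1 - 4*ε1*v)) * (s3 ^ (4:ℤ) * s2 ^ (-1:ℤ) * s3 ^ (-4:ℤ)) *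
          s3 ^ (4:ℤ) * s3 ^ (-2:ℤ) := by group
    _ = s2 ^ ((K-2)*(1 - 4*ε1*v)) * s2 ^ ((-1) * (1 + 2*K)) * s3 ^ (4:ℤ) * s3 ^ (-2:ℤ) := by
          rw [PT (-1)]
    _ = s2 ^ ((K-2)*(1 - 4*ε1*v) + (-1) * (1 + 2*K)) * s3 ^ (2:ℤ) := by
          rw [← zpow_add]; group
  have main : s2 ^ ((-2:ℤ) + ((2 - E)*(2*ε2*v - 2) + (3 - E))) * s3 ^ (2:ℤ)
      = s2 ^ ((K-2)*(1 - 4*ε1*v) + (-1) * (1 + 2*K)) * s3 ^ (2:ℤ) := by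
    rw [← lhs, ← rhs, C3]
  have hcanc : s2 ^ ((-2:ℤ) + ((2 - E)*(2*ε2*v - 2) + (3 - E)))
      = s2 ^ ((K-2)*(1 - 4*ε1*v) + (-1) * (1 + 2*K)) := mul_right_cancel main
  have h2K : s2 ^ (2*K) = 1 := by
    have h : s2 ^ (((-2:ℤ) + ((2 - E)*(2*ε2*v - 2) + (3 - E))) -
        ((K-2)*(1 - 4*ε1*v) + (-1) * (1 + 2*K))) = 1 := by
      rw [zpow_sub, hcanc, mul_inv_cancel]
    rwa [show ((-2:ℤ) + ((2 - E)*(2*ε2*v - 2) + (3 - E))) -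
        ((K-2)*(1 - 4*ε1*v) + (-1) * (1 + 2*K)) = 2*K by rw [hK, hE]; ring] at h
  rcases hε2 with h | h
  · have he : (2*K : ℤ) = 8*v := by rw [hK, h]; ring
    rw [he] at h2K
    exact h2K
  · have he : (2*K : ℤ) = -(8*v) := by rw [hK, h]; ring
    rw [he, zpow_neg] at h2K
    exact inv_eq_one.mp h2K
end

section
/- Let Γ = ⟨σ₁, σ₂, σ₃⟩ with (σ₁σ₂)² = (σ₂σ₃)² = (σ₁σ₂σ₃)² = 1, and suppose σ₂^{2^{β−1}} is central, σ₂σ₁⁻¹ = σ₁σ₂^{3−ε₁2^{β−1}} (ε₁ ∈ {0,1}), σ₃⁻¹σ₂ = σ₂^{3+ε₂2^{β−2}}σ₃^{1−2^{β−2}} and σ₃σ₂⁻¹ = σ₂^{−3+ε₂2^{β−2}}σ₃^{−1+2^{β−2}} (ε₂ = ±1, β ≥ 5), with σ₂ of order dividing 2^β. Then σ₂^{2^{β−1}} = 1. (Hence the group Λ₇ cannot have σ₂ of order 2^β and is not the automorphism group of a tight chiral 4-polytope.) -/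
lemma aux18 {G : Type*} [Group G] (s1 s2 s3 : G) (k ε1 ε2 : ℤ)
    (hε2 : ε2 = 1 ∨ ε2 = -1)
    (h12 : s1 * s2 * (s1 * s2) = 1)
    (h23 : s2 * s3 * (s2 * s3) = 1)
    (h123 : s1 * s2 * s3 * (s1 * s2 * s3) = 1)
    (hq : s2 ^ (32 * k) = 1)
    (hc : ∀ g : G, g * s2 ^ (16 * k) = s2 ^ (16 * k) * g)
    (r1 : s2 * s1⁻¹ = s1 * s2 ^ (3 - ε1 * (16 * k)))
    (r2 : s3⁻¹ * s2 = s2 ^ (3 + ε2 * (8 * k)) * s3 ^ (1 - 8 * k))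
    (r3 : s3 * s2⁻¹ = s2 ^ ((-3) + ε2 * (8 * k)) * s3 ^ ((-1) + 8 * k)) :
    s2 ^ (16 * k) = 1 := by
  -- trivial powers of the relation s2^(32k)=1
  have hz1 : ∀ m : ℤ, s2 ^ (32 * k * m) = 1 := fun m => by rw [zpow_mul, hq, one_zpow]
  -- central powers
  have hcen : ∀ (m : ℤ) (g : G), g * s2 ^ (16 * k * m) = s2 ^ (16 * k * m) * g := by
    intro m g
    have := (Commute.zpow_right (hc g) m)
    rwa [← zpow_mul] at this
  -- basic involution consequences
  have s1inv : s1⁻¹ = s2 * s1 * s2 := by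
    refine inv_eq_of_mul_eq_one_right ?_
    calc s1 * (s2 * s1 * s2) = s1 * s2 * (s1 * s2) := by group
      _ = 1 := h12
  have s2s1s2 : s2 * s1 * s2 = s1⁻¹ := s1inv.symm
  have s3inv : s3⁻¹ = s2 * s3 * s2 := by
    refine inv_eq_of_mul_eq_one_right ?_
    calc s3 * (s2 * s3 * s2) = (s2⁻¹ * (s2 * s3 * (s2 * s3))) * s2 := by group
      _ = (s2⁻¹ * 1) * s2 := by rw [h23]
      _ = 1 := by group
  have s3e : s3 = s2⁻¹ * s3⁻¹ * s2⁻¹ := by rw [s3inv]; group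
  have uinv : (s1 * s2)⁻¹ = s1 * s2 := by
    refine inv_eq_of_mul_eq_one_right ?_
    exact h12
  have hus3u : (s1 * s2) * s3 * (s1 * s2) = s3⁻¹ := by
    refine (inv_eq_of_mul_eq_one_left ?_).symm
    calc (s1 * s2) * s3 * (s1 * s2) * s3 = s1 * s2 * s3 * (s1 * s2 * s3) := by group
      _ = 1 := h123
  -- r1 consequence: s2^2 * s1 = s1 * s2^2 * z^(-ε1)
  have hr1 : s2 * (s2 * s1 * s2) = s1 * s2 ^ (3 - ε1 * (16 * k)) := by
    rw [s2s1s2]; exact r1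
  have hN1 : s2 ^ (2:ℤ) * s1 = s1 * s2 ^ (2:ℤ) * s2 ^ (16 * k * (-ε1)) := by
    calc s2 ^ (2:ℤ) * s1 = (s2 * (s2 * s1 * s2)) * s2⁻¹ := by
          rw [zpow_two]; group
      _ = (s1 * s2 ^ (3 - ε1 * (16 * k))) * s2⁻¹ := by rw [hr1]
      _ = s1 * s2 ^ (2:ℤ) * s2 ^ (16 * k * (-ε1)) := by group
  have hconj2 : s1⁻¹ * s2 ^ (2:ℤ) * s1 = s2 ^ (2:ℤ) * s2 ^ (16 * k * (-ε1)) := by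
    calc s1⁻¹ * s2 ^ (2:ℤ) * s1 = s1⁻¹ * (s2 ^ (2:ℤ) * s1) := by group
      _ = s1⁻¹ * (s1 * s2 ^ (2:ℤ) * s2 ^ (16 * k * (-ε1))) := by rw [hN1]
      _ = s2 ^ (2:ℤ) * s2 ^ (16 * k * (-ε1)) := by group
  -- s1 commutes with w = s2^(8k)
  have h1w : s1⁻¹ * s2 ^ (8 * k) * s1 = s2 ^ (8 * k) := by
    have h4 : s1⁻¹ * (s2 ^ (2:ℤ)) ^ (4 * k) * s1 = (s2 ^ (2:ℤ) * s2 ^ (16 * k * (-ε1))) ^ (4 * k) := by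
      calc s1⁻¹ * (s2 ^ (2:ℤ)) ^ (4 * k) * s1
          = (s1⁻¹ * s2 ^ (2:ℤ) * s1⁻¹⁻¹) ^ (4 * k) := by rw [conj_zpow]; group
        _ = (s1⁻¹ * s2 ^ (2:ℤ) * s1) ^ (4 * k) := by rw [inv_inv]
        _ = _ := by rw [hconj2]
    have hcomm : Commute (s2 ^ (2:ℤ)) (s2 ^ (16 * k * (-ε1))) :=
      (Commute.refl s2).zpow_zpow _ _
    rw [hcomm.mul_zpow, ← zpow_mul, ← zpow_mul] at h4
    have he : 16 * k * -ε1 * (4 * k) = 32 * k * (-(2 * k * ε1)) := by ring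
    rw [he, hz1, mul_one] at h4
    have he2 : (2:ℤ) * (4 * k) = 8 * k := by ring
    rw [he2] at h4
    exact h4
  have hw1 : s1 * s2 ^ (8 * k) * s1⁻¹ = s2 ^ (8 * k) := by
    calc s1 * s2 ^ (8 * k) * s1⁻¹ = s1 * (s1⁻¹ * s2 ^ (8 * k) * s1) * s1⁻¹ := by rw [h1w]
      _ = s2 ^ (8 * k) := by group

  -- conjugation by u = s1*s2 on zpow
  have conj_pow_u : ∀ (x : G) (n : ℤ),
      ((s1*s2) * x * (s1*s2))^n = (s1*s2) * x^n * (s1*s2) := by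
    intro x n
    conv_lhs => rw [show (s1*s2)*x*(s1*s2) = (s1*s2)*x*(s1*s2)⁻¹ from by rw [uinv]]
    rw [conj_zpow, uinv]
  -- u s2^2 u = s2^2 * z^{ε1}
  have h1s2sq : s1 * s2^(2:ℤ) * s1⁻¹ = s2^(2:ℤ) * s2^(16*k*ε1) := by
    calc s1 * s2^(2:ℤ) * s1⁻¹
        = (s1 * s2^(2:ℤ) * s2^(16*k*(-ε1))) * s2^(16*k*ε1) * s1⁻¹ := by group
      _ = (s2^(2:ℤ) * s1) * s2^(16*k*ε1) * s1⁻¹ := by rw [← hN1]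
      _ = s2^(2:ℤ) * (s1 * s2^(16*k*ε1)) * s1⁻¹ := by group
      _ = s2^(2:ℤ) * (s2^(16*k*ε1) * s1) * s1⁻¹ := by rw [hcen ε1 s1]
      _ = s2^(2:ℤ) * s2^(16*k*ε1) := by group
  have hu_s2sq : (s1*s2) * s2^(2:ℤ) * (s1*s2) = s2^(2:ℤ) * s2^(16*k*ε1) := by
    calc (s1*s2) * s2^(2:ℤ) * (s1*s2)
        = s1 * s2^(2:ℤ) * (s2*s1*s2) := by rw [zpow_two]; group
      _ = s1 * s2^(2:ℤ) * s1⁻¹ := by rw [s2s1s2]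
      _ = s2^(2:ℤ) * s2^(16*k*ε1) := h1s2sq
  -- u w u = w
  have hs2w : s2 * s2^(8*k) = s2^(8*k) * s2 := ((Commute.refl s2).zpow_right (8*k)).eq
  have huw : (s1*s2) * s2^(8*k) * (s1*s2) = s2^(8*k) := by
    calc (s1*s2) * s2^(8*k) * (s1*s2)
        = s1 * (s2 * s2^(8*k)) * (s1 * s2) := by group
      _ = s1 * (s2^(8*k) * s2) * (s1 * s2) := by rw [hs2w]
      _ = s1 * s2^(8*k) * (s2*s1*s2) := by group
      _ = s1 * s2^(8*k) * s1⁻¹ := by rw [s2s1s2]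
      _ = s2^(8*k) := hw1
  have huwe : (s1*s2) * s2^(8*k*ε2) * (s1*s2) = s2^(8*k*ε2) := by
    calc (s1*s2) * s2^(8*k*ε2) * (s1*s2)
        = (s1*s2) * (s2^(8*k))^ε2 * (s1*s2) := by rw [zpow_mul]
      _ = ((s1*s2) * s2^(8*k) * (s1*s2))^ε2 := (conj_pow_u _ _).symm
      _ = (s2^(8*k))^ε2 := by rw [huw]
      _ = s2^(8*k*ε2) := by rw [← zpow_mul]
  -- E1 : s3 s2^2 = s2^{2+e} s3^{1-8k}
  have e1' : s2 * s3 * s2^(2:ℤ) = s2^(3 + ε2*(8*k)) * s3^(1-8*k) := by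
    calc s2 * s3 * s2^(2:ℤ) = (s2*s3*s2)*s2 := by rw [zpow_two]; group
      _ = s3⁻¹ * s2 := by rw [← s3inv]
      _ = _ := r2
  have E1 : s3 * s2^(2:ℤ) = s2^(2 + ε2*(8*k)) * s3^(1-8*k) := by
    calc s3 * s2^(2:ℤ) = s2⁻¹ * (s2 * s3 * s2^(2:ℤ)) := by group
      _ = s2⁻¹ * (s2^(3 + ε2*(8*k)) * s3^(1-8*k)) := by rw [e1']
      _ = _ := by group
  -- E2 : s2^2 s3 = s3^{1-8k} s2^{2-e}
  have e2' : s2⁻¹*s3⁻¹*s2⁻¹*s2⁻¹ = s2^((-3)+ε2*(8*k)) * s3^((-1)+8*k) := by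
    calc s2⁻¹*s3⁻¹*s2⁻¹*s2⁻¹ = (s2⁻¹*s3⁻¹*s2⁻¹)*s2⁻¹ := by group
      _ = s3 * s2⁻¹ := by rw [← s3e]
      _ = _ := r3
  have e2'' : s3⁻¹ * s2^(-2:ℤ) = s2^((-2)+ε2*(8*k)) * s3^((-1)+8*k) := by
    calc s3⁻¹ * s2^(-2:ℤ) = s2 * (s2⁻¹*s3⁻¹*s2⁻¹*s2⁻¹) := by group
      _ = s2 * (s2^((-3)+ε2*(8*k)) * s3^((-1)+8*k)) := by rw [e2']
      _ = _ := by group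
  have E2 : s2^(2:ℤ) * s3 = s3^(1-8*k) * s2^(2 - ε2*(8*k)) := by
    calc s2^(2:ℤ) * s3 = (s3⁻¹ * s2^(-2:ℤ))⁻¹ := by group
      _ = (s2^((-2)+ε2*(8*k)) * s3^((-1)+8*k))⁻¹ := by rw [e2'']
      _ = _ := by group
  -- E1 conjugated by u : s3⁻¹ s2^2 = s2^{2+e} s3^{-(1-8k)}
  have hsplit : s2^(2+ε2*(8*k)) = s2^(2:ℤ) * s2^(8*k*ε2) := by
    rw [← zpow_add]; congr 1; ring
  have hue : (s1*s2) * s2^(2+ε2*(8*k)) * (s1*s2) = s2^(2+ε2*(8*k)) * s2^(16*k*ε1) := by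
    calc (s1*s2) * s2^(2+ε2*(8*k)) * (s1*s2)
        = (s1*s2) * (s2^(2:ℤ) * s2^(8*k*ε2)) * (s1*s2) := by rw [hsplit]
      _ = (s1*s2) * s2^(2:ℤ) * ((s1*s2)*(s1*s2)) * s2^(8*k*ε2) * (s1*s2) := by
            rw [h12]; group
      _ = ((s1*s2) * s2^(2:ℤ) * (s1*s2)) * ((s1*s2) * s2^(8*k*ε2) * (s1*s2)) := by group
      _ = (s2^(2:ℤ) * s2^(16*k*ε1)) * s2^(8*k*ε2) := by rw [hu_s2sq, huwe]
      _ = (s2^(2:ℤ) * s2^(8*k*ε2)) * s2^(16*k*ε1) := by group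
      _ = s2^(2+ε2*(8*k)) * s2^(16*k*ε1) := by rw [← hsplit]
  have hub : (s1*s2) * s3^(1-8*k) * (s1*s2) = s3^(-(1-8*k)) := by
    calc (s1*s2) * s3^(1-8*k) * (s1*s2)
        = ((s1*s2) * s3 * (s1*s2))^(1-8*k) := (conj_pow_u _ _).symm
      _ = (s3⁻¹)^(1-8*k) := by rw [hus3u]
      _ = s3^(-(1-8*k)) := by group
  have hL : (s1*s2) * (s3*s2^(2:ℤ)) * (s1*s2) = s3⁻¹ * (s2^(2:ℤ) * s2^(16*k*ε1)) := by
    calc (s1*s2) * (s3*s2^(2:ℤ)) * (s1*s2)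
        = (s1*s2) * s3 * ((s1*s2)*(s1*s2)) * s2^(2:ℤ) * (s1*s2) := by rw [h12]; group
      _ = ((s1*s2)*s3*(s1*s2)) * ((s1*s2)*s2^(2:ℤ)*(s1*s2)) := by group
      _ = s3⁻¹ * (s2^(2:ℤ) * s2^(16*k*ε1)) := by rw [hus3u, hu_s2sq]
  have hR : (s1*s2) * (s2^(2+ε2*(8*k)) * s3^(1-8*k)) * (s1*s2)
      = (s2^(2+ε2*(8*k)) * s2^(16*k*ε1)) * s3^(-(1-8*k)) := by
    calc (s1*s2) * (s2^(2+ε2*(8*k)) * s3^(1-8*k)) * (s1*s2)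
        = (s1*s2) * s2^(2+ε2*(8*k)) * ((s1*s2)*(s1*s2)) * s3^(1-8*k) * (s1*s2) := by
            rw [h12]; group
      _ = ((s1*s2)*s2^(2+ε2*(8*k))*(s1*s2)) * ((s1*s2)*s3^(1-8*k)*(s1*s2)) := by group
      _ = (s2^(2+ε2*(8*k)) * s2^(16*k*ε1)) * s3^(-(1-8*k)) := by rw [hue, hub]
  have hLR : s3⁻¹ * (s2^(2:ℤ) * s2^(16*k*ε1))
      = (s2^(2+ε2*(8*k)) * s2^(16*k*ε1)) * s3^(-(1-8*k)) := by
    rw [← hL, ← hR, E1]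
  have E1s : s3⁻¹ * s2^(2:ℤ) = s2^(2+ε2*(8*k)) * s3^(-(1-8*k)) := by
    calc s3⁻¹ * s2^(2:ℤ)
        = (s3⁻¹ * (s2^(2:ℤ) * s2^(16*k*ε1))) * s2^(16*k*(-ε1)) := by group
      _ = ((s2^(2+ε2*(8*k)) * s2^(16*k*ε1)) * s3^(-(1-8*k))) * s2^(16*k*(-ε1)) := by rw [hLR]
      _ = s2^(2+ε2*(8*k)) * (s2^(16*k*ε1) * s3^(-(1-8*k))) * s2^(16*k*(-ε1)) := by group
      _ = s2^(2+ε2*(8*k)) * (s3^(-(1-8*k)) * s2^(16*k*ε1)) * s2^(16*k*(-ε1)) := by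
            rw [hcen ε1 (s3^(-(1-8*k)))]
      _ = s2^(2+ε2*(8*k)) * s3^(-(1-8*k)) := by group
  -- three expressions for s3^(1-8k)
  have hb1 : s3^(1-8*k) = s2^(-(2+ε2*(8*k))) * (s3 * s2^(2:ℤ)) := by
    rw [E1]; group
  have hb2 : s3^(1-8*k) = s2^(-2:ℤ) * s3 * s2^(2+ε2*(8*k)) := by
    calc s3^(1-8*k) = (s2^(2+ε2*(8*k)) * s3^(-(1-8*k)))⁻¹ * s2^(2+ε2*(8*k)) := by group
      _ = (s3⁻¹ * s2^(2:ℤ))⁻¹ * s2^(2+ε2*(8*k)) := by rw [E1s]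
      _ = s2^(-2:ℤ) * s3 * s2^(2+ε2*(8*k)) := by group
  have hb3 : s3^(1-8*k) = s2^(2:ℤ) * s3 * s2^(-(2-ε2*(8*k))) := by
    rw [E2]; group
  -- key inversion : s3 s2^{e} s3⁻¹ = s2^{-e}
  have hkey0 : s2^(-(ε2*(8*k))) * s3 = s3 * s2^(ε2*(8*k)) := by
    have h := hb1.symm.trans hb2
    calc s2^(-(ε2*(8*k))) * s3
        = s2^(2:ℤ) * (s2^(-(2+ε2*(8*k))) * (s3 * s2^(2:ℤ))) * s2^(-2:ℤ) := by group
      _ = s2^(2:ℤ) * (s2^(-2:ℤ) * s3 * s2^(2+ε2*(8*k))) * s2^(-2:ℤ) := by rw [h]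
      _ = s3 * s2^(ε2*(8*k)) := by group
  have hkey : s3 * s2^(ε2*(8*k)) * s3⁻¹ = s2^(-(ε2*(8*k))) := by
    rw [← hkey0]; group
  -- CONJ relation
  have hCONJ : s3 * s2^(4-ε2*(8*k)) * s3⁻¹ = s2^(4+ε2*(8*k)) := by
    have h := hb1.symm.trans hb3
    calc s3 * s2^(4-ε2*(8*k)) * s3⁻¹
        = s2^(2+ε2*(8*k)) * (s2^(-(2+ε2*(8*k))) * (s3 * s2^(2:ℤ)))
            * s2^(2-ε2*(8*k)) * s3⁻¹ := by group
      _ = s2^(2+ε2*(8*k)) * (s2^(2:ℤ) * s3 * s2^(-(2-ε2*(8*k))))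
            * s2^(2-ε2*(8*k)) * s3⁻¹ := by rw [h]
      _ = s2^(4+ε2*(8*k)) := by group
  -- raise to the power 2k : s3 commutes with s2^(8k)
  have hconj2k : s3 * s2^((4-ε2*(8*k))*(2*k)) * s3⁻¹ = s2^((4+ε2*(8*k))*(2*k)) := by
    calc s3 * s2^((4-ε2*(8*k))*(2*k)) * s3⁻¹
        = s3 * (s2^(4-ε2*(8*k)))^(2*k) * s3⁻¹ := by rw [zpow_mul]
      _ = (s3 * s2^(4-ε2*(8*k)) * s3⁻¹)^(2*k) := by rw [conj_zpow]
      _ = (s2^(4+ε2*(8*k)))^(2*k) := by rw [hCONJ]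
      _ = s2^((4+ε2*(8*k))*(2*k)) := by rw [← zpow_mul]
  have hsa : s2^((4-ε2*(8*k))*(2*k)) = s2^(8*k) * s2^(16*k*(-(k*ε2))) := by
    rw [← zpow_add]; congr 1; ring
  have hsb : s2^((4+ε2*(8*k))*(2*k)) = s2^(8*k) * s2^(16*k*(k*ε2)) := by
    rw [← zpow_add]; congr 1; ring
  have hwconj : s3 * s2^(8*k) * s3⁻¹ = s2^(8*k) := by
    rw [hsa, hsb] at hconj2k
    have h2 : s3 * s2^(8*k) * s3⁻¹ * s2^(16*k*(-(k*ε2))) = s2^(8*k) * s2^(16*k*(k*ε2)) := by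
      calc s3 * s2^(8*k) * s3⁻¹ * s2^(16*k*(-(k*ε2)))
          = s3 * s2^(8*k) * (s3⁻¹ * s2^(16*k*(-(k*ε2)))) := by group
        _ = s3 * s2^(8*k) * (s2^(16*k*(-(k*ε2))) * s3⁻¹) := by rw [hcen (-(k*ε2)) s3⁻¹]
        _ = s3 * (s2^(8*k) * s2^(16*k*(-(k*ε2)))) * s3⁻¹ := by group
        _ = s2^(8*k) * s2^(16*k*(k*ε2)) := hconj2k
    calc s3 * s2^(8*k) * s3⁻¹
        = (s3 * s2^(8*k) * s3⁻¹ * s2^(16*k*(-(k*ε2)))) * s2^(16*k*(k*ε2)) := by group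
      _ = (s2^(8*k) * s2^(16*k*(k*ε2))) * s2^(16*k*(k*ε2)) := by rw [h2]
      _ = s2^(8*k) * s2^(32*k*(k*ε2)) := by group
      _ = s2^(8*k) * 1 := by rw [hz1]
      _ = s2^(8*k) := by group
  -- raise hkey to the power ε2 : s3 inverts s2^(8k)
  have hε2sq : ε2 * ε2 = 1 := by rcases hε2 with h|h <;> subst h <;> norm_num
  have hea : ε2*(8*k)*ε2 = 8*k := by
    rw [mul_comm (ε2*(8*k)) ε2, ← mul_assoc, hε2sq, one_mul]
  have heb : -(ε2*(8*k))*ε2 = -(8*k) := by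
    have h : -(ε2*(8*k))*ε2 = -(8*k)*(ε2*ε2) := by ring
    rw [h, hε2sq, mul_one]
  have hwinv : s3 * s2^(8*k) * s3⁻¹ = s2^(-(8*k)) := by
    calc s3 * s2^(8*k) * s3⁻¹
        = s3 * s2^(ε2*(8*k)*ε2) * s3⁻¹ := by rw [hea]
      _ = s3 * (s2^(ε2*(8*k)))^ε2 * s3⁻¹ := by rw [zpow_mul]
      _ = (s3 * s2^(ε2*(8*k)) * s3⁻¹)^ε2 := by rw [conj_zpow]
      _ = (s2^(-(ε2*(8*k))))^ε2 := by rw [hkey]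
      _ = s2^(-(ε2*(8*k))*ε2) := by rw [← zpow_mul]
      _ = s2^(-(8*k)) := by rw [heb]
  have hfin : s2^(8*k) = s2^(-(8*k)) := hwconj.symm.trans hwinv
  calc s2^(16*k) = s2^(8*k) * s2^(8*k) := by rw [← zpow_add]; congr 1; ring
    _ = s2^(8*k) * s2^(-(8*k)) := by nth_rewrite 2 [hfin]; rfl
    _ = 1 := by group



theorem stmt_18 {G : Type*} [Group G] (s1 s2 s3 : G) (β : ℕ) (hβ : 5 ≤ β)
    (ε1 ε2 : ℤ) (hε1 : ε1 = 0 ∨ ε1 = 1) (hε2 : ε2 = 1 ∨ ε2 = -1)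
    (hgen : Subgroup.closure {s1, s2, s3} = ⊤)
    (h12 : (s1 * s2) ^ 2 = 1) (h23 : (s2 * s3) ^ 2 = 1)
    (h123 : (s1 * s2 * s3) ^ 2 = 1)
    (hq : s2 ^ ((2 : ℕ) ^ β) = 1)
    (hcentral : ∀ g : G, g * s2 ^ ((2 : ℤ) ^ (β - 1)) = s2 ^ ((2 : ℤ) ^ (β - 1)) * g)
    (r1 : s2 * s1⁻¹ = s1 * s2 ^ ((3 : ℤ) - ε1 * 2 ^ (β - 1)))
    (r2 : s3⁻¹ * s2 = s2 ^ ((3 : ℤ) + ε2 * 2 ^ (β - 2)) * s3 ^ ((1 : ℤ) - 2 ^ (β - 2)))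
    (r3 : s3 * s2⁻¹ = s2 ^ ((-3 : ℤ) + ε2 * 2 ^ (β - 2)) * s3 ^ ((-1 : ℤ) + 2 ^ (β - 2))) :
    s2 ^ ((2 : ℤ) ^ (β - 1)) = 1 := by
  set k : ℤ := 2 ^ (β - 5) with hk
  have h1 : (2:ℤ) ^ (β - 1) = 16 * k := by
    have hβ1 : β - 1 = 4 + (β - 5) := by omega
    rw [hk, hβ1, pow_add]; norm_num
  have h2 : (2:ℤ) ^ (β - 2) = 8 * k := by
    have hβ2 : β - 2 = 3 + (β - 5) := by omega
    rw [hk, hβ2, pow_add]; norm_num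
  have hqz : s2 ^ ((32:ℤ) * k) = 1 := by
    have h3 : (32:ℤ) * k = ((2 ^ β : ℕ) : ℤ) := by
      have hβ3 : β = 5 + (β - 5) := by omega
      push_cast
      calc (32:ℤ) * k = 2 ^ (5 + (β - 5)) := by rw [hk, pow_add]; norm_num
        _ = 2 ^ β := by rw [← hβ3]
    rw [h3, zpow_natCast]
    exact hq
  rw [pow_two] at h12 h23 h123
  rw [h1] at hcentral r1
  rw [h2] at r2 r3
  rw [h1]
  exact aux18 s1 s2 s3 k ε1 ε2 hε2 h12 h23 h123 hqz hcentral r1 r2 r3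
end
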